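/- arXiv:math/0104063 — 7 statements merged into one kernel-verified Lean document; each statement's English description precedes it below -/
import Mathlib

section
/- Let π = a_1 a_2 ⋯ a_d be a permutation of [d] with G-sequence S_1, S_2, …, S_c. If a_m and a_k belong to the same set S_i of the G-sequence and m < k, then ℓ_π(m) ≥ ℓ_π(k). -/
/-- `ellSpec G a k p` says that there are positions `i₁ < i₂ < ⋯ < i_p < i_{p+1} = k`
such that `a_{i_j}` and `a_{i_{j+1}}` are adjacent in `G` for all `j`. -/
def ellSpec {d : ℕ} (G : SimpleGraph (Fin d)) (a : Equiv.Perm (Fin d)) (k : Fin d)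
    (p : ℕ) : Prop :=
  ∃ c : Fin (p + 1) → Fin d, StrictMono c ∧ c (Fin.last p) = k ∧
    ∀ j : Fin p, G.Adj (a (c j.castSucc)) (a (c j.succ))

/-- `ell G a k` is the largest `p` such that `ellSpec G a k p` holds: the length of the
longest increasing path in `a` ending at position `k`. -/
noncomputable def ell {d : ℕ} (G : SimpleGraph (Fin d)) (a : Equiv.Perm (Fin d))
    (k : Fin d) : ℕ :=
  sSup {p | ellSpec G a k p}

/-- `j` is a cut of `a` (with respect to `G`): either `j` is the first position, or
comparing with the preceding position `i` we have `ℓ(i) < ℓ(j)`, or `ℓ(i) = ℓ(j)` and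
`a_i < a_j`. -/
noncomputable def IsCut {d : ℕ} (G : SimpleGraph (Fin d)) (a : Equiv.Perm (Fin d))
    (j : Fin d) : Prop :=
  (j : ℕ) = 0 ∨ ∃ i : Fin d, (i : ℕ) + 1 = (j : ℕ) ∧
    (ell G a i < ell G a j ∨ (ell G a i = ell G a j ∧ a i < a j))

/-- The index of the block of the `G`-sequence of `a` containing position `k`:
the number of cuts at positions `≤ k`.  Two positions `k, k'` carry letters lying in
the same set `S_i` of the `G`-sequence iff `blockIdx G a k = blockIdx G a k'`. -/
noncomputable def blockIdx {d : ℕ} (G : SimpleGraph (Fin d)) (a : Equiv.Perm (Fin d))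
    (k : Fin d) : ℕ :=
  Nat.card {j : Fin d // j ≤ k ∧ IsCut G a j}

/-- If `a_m` and `a_k` lie in the same set of the `G`-sequence of `a`
and `m < k`, then `ℓ(m) ≥ ℓ(k)`. -/
theorem ell_ge_of_same_block {d : ℕ} (hd : 1 ≤ d) (G : SimpleGraph (Fin d))
    (a : Equiv.Perm (Fin d)) (m k : Fin d) (hmk : m < k)
    (hblock : blockIdx G a m = blockIdx G a k) : ell G a k ≤ ell G a m := by
  -- No cuts strictly between m and k (inclusive of k)
  have nocut : ∀ j : Fin d, m < j → j ≤ k → ¬ IsCut G a j := by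
    intro j hmj hjk hcut
    have hsub : {j' : Fin d | j' ≤ m ∧ IsCut G a j'} ⊂ {j' : Fin d | j' ≤ k ∧ IsCut G a j'} := by
      constructor
      · intro x hx
        exact ⟨le_trans hx.1 (le_of_lt hmk), hx.2⟩
      · intro hs
        have hj : j ∈ {j' : Fin d | j' ≤ m ∧ IsCut G a j'} := hs ⟨hjk, hcut⟩
        exact absurd hj.1 (not_le.mpr hmj)
    have hlt : ({j' : Fin d | j' ≤ m ∧ IsCut G a j'}).ncard <
        ({j' : Fin d | j' ≤ k ∧ IsCut G a j'}).ncard :=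
      Set.ncard_lt_ncard hsub (Set.toFinite _)
    have hbm : blockIdx G a m = ({j' : Fin d | j' ≤ m ∧ IsCut G a j'}).ncard := by
      rw [blockIdx, ← Nat.card_coe_set_eq]; rfl
    have hbk : blockIdx G a k = ({j' : Fin d | j' ≤ k ∧ IsCut G a j'}).ncard := by
      rw [blockIdx, ← Nat.card_coe_set_eq]; rfl
    rw [hbm, hbk] at hblock
    omega
  -- One step: if j = i+1 is not a cut, then ell j ≤ ell i
  have step : ∀ i j : Fin d, (i : ℕ) + 1 = (j : ℕ) → ¬ IsCut G a j →
      ell G a j ≤ ell G a i := by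
    intro i j hij hnot
    by_contra h
    push_neg at h
    exact hnot (Or.inr ⟨i, hij, Or.inl h⟩)
  -- Induction from m to k
  have main : ∀ n, (m : ℕ) ≤ n → ∀ hn : n < d, n ≤ (k : ℕ) →
      ell G a ⟨n, hn⟩ ≤ ell G a m := by
    intro n hn
    induction n, hn using Nat.le_induction with
    | base =>
      intro hn _
      have : (⟨(m : ℕ), hn⟩ : Fin d) = m := Fin.ext rfl
      rw [this]
    | succ n hmn ih =>
      intro hn hnk
      have hn' : n < d := by omega
      have hji : ((⟨n, hn'⟩ : Fin d) : ℕ) + 1 = ((⟨n + 1, hn⟩ : Fin d) : ℕ) := rfl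
      have hmj : m < (⟨n + 1, hn⟩ : Fin d) := by
        rw [Fin.lt_def]; simp; omega
      have hjk : (⟨n + 1, hn⟩ : Fin d) ≤ k := by
        rw [Fin.le_def]; simpa using hnk
      have h1 := step _ _ hji (nocut _ hmj hjk)
      exact le_trans h1 (ih hn' (by omega))
  have := main (k : ℕ) (le_of_lt hmk) k.isLt (le_refl _)
  simpa using this
end

section
/- For every integer n ≥ 0, the number of proper colorings of G with color set {1, …, n} satisfies χ_G(n) = Σ_{π ∈ S_d} C(n + d − c(π), d), where the sum is over all permutations π of [d], c(π) is the number of cuts of π with respect to G, and C(·,·) is the binomial coefficient. -/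
/-- `c(π)`: the number of cuts of the permutation `a` with respect to `G`. -/
noncomputable def numCuts {d : ℕ} (G : SimpleGraph (Fin d))
    (a : Equiv.Perm (Fin d)) : ℕ :=
  Nat.card {j : Fin d // IsCut G a j}

/-- `χ_G(n)`: the number of proper colorings of `G` with color set `{1, …, n}`. -/
noncomputable def chromVal {d : ℕ} (G : SimpleGraph (Fin d)) (n : ℕ) : ℕ :=
  Nat.card {φ : Fin d → Fin n // ∀ u v : Fin d, G.Adj u v → φ u ≠ φ v}

/-!
A permutation `a` together with a weakly increasing `b : Fin d → Fin n` that increases strictly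
across every cut of `a` yields the proper colouring `b ∘ a⁻¹`: along an edge from an earlier to a
later position `ℓ` increases, while on a block of constant `b` the keys `(ℓ, a)` decrease.
Conversely every proper colouring `φ` arises from exactly one such pair. Indeed `ℓ` only depends on
how the order of positions orients the edges of `G`, so for every admissible `a` it is the length
of the longest `φ`-increasing path ending at the vertex; hence `a` is forced to list the vertices by
increasing colour and, within a colour class, by decreasing `(ℓ, vertex)`. For fixed `a`, adding
to `b` the number of non-cuts up to each position identifies the admissible `b` with the strictly
increasing maps `Fin d → Fin (n + d - c(a))`, which are counted by `C(n + d - c(a), d)`.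
-/

open Finset

namespace ChromaticCuts

section Counting

theorem card_strictMono_fin (k M : ℕ) :
    Nat.card {g : Fin k → Fin M // StrictMono g} = M.choose k := by
  classical
  let e : {g : Fin k → Fin M // StrictMono g} ≃ {s : Finset (Fin M) // s.card = k} :=
    { toFun g := ⟨univ.image g.1, by simp [card_image_of_injective _ g.2.injective]⟩
      invFun s := ⟨s.1.orderEmbOfFin s.2, (s.1.orderEmbOfFin s.2).strictMono⟩
      left_inv g := Subtype.ext
        (orderEmbOfFin_unique _ (fun x => mem_image_of_mem _ (mem_univ x)) g.2).symm
      right_inv s := Subtype.ext <| coe_injective <| by simp }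
  rw [Nat.card_congr e, Nat.card_eq_fintype_card, Fintype.card_finset_len, Fintype.card_fin]

variable {m : ℕ} (strict : Fin m → Prop) [DecidablePred strict]

def weakCount (k : Fin (m + 1)) : ℕ := #{i | ¬ strict i ∧ i.castSucc < k}

theorem weakCount_zero : weakCount strict 0 = 0 := by
  simp [weakCount]

theorem weakCount_succ (i : Fin m) :
    weakCount strict i.succ = weakCount strict i.castSucc + if strict i then 0 else 1 := by
  have : univ.filter (fun j => ¬ strict j ∧ j.castSucc < i.succ) =
      univ.filter (fun j => ¬ strict j ∧ j.castSucc < i.castSucc) ∪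
        univ.filter (fun j => ¬ strict j ∧ j = i) := by
    ext j
    simp only [mem_filter, mem_union, mem_univ, true_and, Fin.castSucc_lt_succ_iff,
      Fin.castSucc_lt_castSucc_iff]
    grind
  rw [weakCount, weakCount, this, card_union_of_disjoint]
  · split_ifs with hw <;> simp [filter_and, hw, filter_eq']
  · grind [disjoint_filter]

theorem weakCount_last : weakCount strict (Fin.last m) = #{i | ¬ strict i} := by
  simp [weakCount, Fin.castSucc_lt_last]

theorem weakCount_le_card (k : Fin (m + 1)) : weakCount strict k ≤ #{i | ¬ strict i} :=
  card_le_card fun i => by simp +contextual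

theorem weakCount_le_of_strictMono {g : Fin (m + 1) → ℕ} (hg : StrictMono g) (k : Fin (m + 1)) :
    weakCount strict k ≤ g k := by
  induction k using Fin.induction with
  | zero => simp [weakCount_zero]
  | succ i ih =>
    have := hg i.castSucc_lt_succ
    rw [weakCount_succ]
    split_ifs <;> omega

theorem sub_weakCount_step {g : Fin (m + 1) → ℕ} (hg : StrictMono g) (i : Fin m) :
    g i.castSucc - weakCount strict i.castSucc ≤ g i.succ - weakCount strict i.succ ∧
      (strict i →
        g i.castSucc - weakCount strict i.castSucc < g i.succ - weakCount strict i.succ) := by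
  have hlt := hg i.castSucc_lt_succ
  have hle := weakCount_le_of_strictMono strict hg i.castSucc
  rw [weakCount_succ]
  split_ifs with hs
  · exact ⟨by omega, fun _ => by omega⟩
  · exact ⟨by omega, fun h => absurd h hs⟩

variable (n : ℕ)

def addWeakCountEquiv :
    {b : Fin (m + 1) → Fin n //
        ∀ i, b i.castSucc ≤ b i.succ ∧ (strict i → b i.castSucc < b i.succ)} ≃
      {g : Fin (m + 1) → Fin (n + #{i | ¬ strict i}) // StrictMono g} where
  toFun b := ⟨fun k => ⟨b.1 k + weakCount strict k, by
      have := weakCount_le_card strict k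
      omega⟩, by
    refine Fin.strictMono_iff_lt_succ.2 fun i => Fin.mk_lt_mk.2 ?_
    obtain ⟨hle, hlt⟩ := b.2 i
    rw [weakCount_succ]
    split_ifs with hs
    · have := hlt hs
      omega
    · omega⟩
  invFun g := ⟨fun k => ⟨g.1 k - weakCount strict k, by
      have hg : StrictMono fun k => (g.1 k : ℕ) := Fin.val_strictMono.comp g.2
      have hmono : Monotone fun k => (g.1 k : ℕ) - weakCount strict k :=
        Fin.monotone_iff_le_succ.2 fun i => (sub_weakCount_step strict hg i).1
      have hk : (g.1 k : ℕ) - weakCount strict k ≤ g.1 (Fin.last m) - #{i | ¬ strict i} := by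
        simpa [weakCount_last] using hmono (Fin.le_last k)
      have hlast := (g.1 (Fin.last m)).2
      have hW := weakCount_last strict ▸ weakCount_le_of_strictMono strict hg (Fin.last m)
      omega⟩,
    sub_weakCount_step strict (Fin.val_strictMono.comp g.2)⟩
  left_inv b := by ext; simp
  right_inv g := by
    ext k
    exact Nat.sub_add_cancel (weakCount_le_of_strictMono strict (Fin.val_strictMono.comp g.2) k)

theorem card_monotone_with_strict_steps :
    Nat.card {b : Fin (m + 1) → Fin n //
        ∀ i, b i.castSucc ≤ b i.succ ∧ (strict i → b i.castSucc < b i.succ)} =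
      (n + #{i | ¬ strict i}).choose (m + 1) := by
  rw [Nat.card_congr (addWeakCountEquiv strict n), card_strictMono_fin]

end Counting

section LongestPath

variable {d : ℕ} {G : SimpleGraph (Fin d)} {a : Equiv.Perm (Fin d)}

theorem ellSpec_iff {k : Fin d} {p : ℕ} :
    ellSpec G a k p ↔ ∃ c : Fin (p + 1) → Fin d, c (Fin.last p) = k ∧
      ∀ j : Fin p, c j.castSucc < c j.succ ∧ G.Adj (a (c j.castSucc)) (a (c j.succ)) := by
  simp only [ellSpec, Fin.strictMono_iff_lt_succ, forall_and]
  tauto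

theorem ellSpec_zero (k : Fin d) : ellSpec G a k 0 :=
  ellSpec_iff.2 ⟨fun _ => k, rfl, fun j => j.elim0⟩

theorem lt_of_ellSpec {k : Fin d} {p : ℕ} (h : ellSpec G a k p) : p < d := by
  obtain ⟨c, hc, -, -⟩ := h
  simpa using Fintype.card_le_of_injective c hc.injective

theorem bddAbove_ellSpec (k : Fin d) : BddAbove {p | ellSpec G a k p} :=
  ⟨d, fun _ hp => (lt_of_ellSpec hp).le⟩

theorem ellSpec_ell (k : Fin d) : ellSpec G a k (ell G a k) :=
  Nat.sSup_mem ⟨0, ellSpec_zero k⟩ (bddAbove_ellSpec k)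

theorem le_ell_of_ellSpec {k : Fin d} {p : ℕ} (h : ellSpec G a k p) : p ≤ ell G a k :=
  le_csSup (bddAbove_ellSpec k) h

theorem ellSpec_snoc {k l : Fin d} {p : ℕ} (h : ellSpec G a k p) (hkl : k < l)
    (hadj : G.Adj (a k) (a l)) : ellSpec G a l (p + 1) := by
  obtain ⟨c, rfl, hc⟩ := ellSpec_iff.1 h
  refine ellSpec_iff.2 ⟨Fin.snoc c l, by simp, Fin.forall_fin_succ'.2 ⟨fun j => ?_, ?_⟩⟩
  · rw [Fin.succ_castSucc, Fin.snoc_castSucc, Fin.snoc_castSucc]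
    exact hc j
  · simpa using ⟨hkl, hadj⟩

theorem ell_lt_ell_of_adj {k l : Fin d} (hkl : k < l) (hadj : G.Adj (a k) (a l)) :
    ell G a k < ell G a l :=
  Nat.lt_of_succ_le (le_ell_of_ellSpec (ellSpec_snoc (ellSpec_ell k) hkl hadj))

theorem ellSpec_symm_of_orient {a' : Equiv.Perm (Fin d)}
    (horient : ∀ u v, G.Adj u v → a.symm u < a.symm v → a'.symm u < a'.symm v)
    {v : Fin d} {p : ℕ} (h : ellSpec G a (a.symm v) p) : ellSpec G a' (a'.symm v) p := by
  obtain ⟨c, hlast, hc⟩ := ellSpec_iff.1 h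
  refine ellSpec_iff.2 ⟨a'.symm ∘ a ∘ c, by simp [hlast], fun j => ?_⟩
  obtain ⟨hlt, hadj⟩ := hc j
  exact ⟨horient _ _ hadj (by simpa using hlt), by simpa using hadj⟩

theorem ell_symm_eq_of_orient {a' : Equiv.Perm (Fin d)}
    (horient : ∀ u v, G.Adj u v → (a.symm u < a.symm v ↔ a'.symm u < a'.symm v)) (v : Fin d) :
    ell G a (a.symm v) = ell G a' (a'.symm v) :=
  le_antisymm
    (le_ell_of_ellSpec (ellSpec_symm_of_orient (fun u w h => (horient u w h).1) (ellSpec_ell _)))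
    (le_ell_of_ellSpec (ellSpec_symm_of_orient (fun u w h => (horient u w h).2) (ellSpec_ell _)))

end LongestPath

section Cuts

variable {d : ℕ} (G : SimpleGraph (Fin d)) (a : Equiv.Perm (Fin d))

noncomputable def cutKey (i : Fin d) : ℕ ×ₗ Fin d := toLex (ell G a i, a i)

theorem cutKey_injective : Function.Injective (cutKey G a) := fun _ _ h =>
  a.injective (congrArg (fun x => (ofLex x).2) h)

def IsCompatible {n : ℕ} (b : Fin d → Fin n) : Prop :=
  Monotone b ∧ ∀ ⦃i j⦄, i < j → IsCut G a j → b i < b j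

end Cuts

section CompatibleMaps

variable {m : ℕ} {G : SimpleGraph (Fin (m + 1))} {a : Equiv.Perm (Fin (m + 1))}

theorem isCut_zero : IsCut G a 0 := Or.inl rfl

theorem isCut_succ_iff (i : Fin m) :
    IsCut G a i.succ ↔ cutKey G a i.castSucc < cutKey G a i.succ := by
  simp only [IsCut, cutKey, Prod.Lex.toLex_lt_toLex, Fin.val_succ, Nat.add_eq_zero_iff,
    one_ne_zero, and_false, false_or, Nat.add_right_cancel_iff]
  constructor
  · rintro ⟨j, hj, h⟩
    rwa [show j = i.castSucc from Fin.ext hj] at h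
  · exact fun h => ⟨i.castSucc, rfl, h⟩

theorem isCompatible_iff_forall_succ {n : ℕ} {b : Fin (m + 1) → Fin n} :
    IsCompatible G a b ↔
      ∀ i : Fin m, b i.castSucc ≤ b i.succ ∧ (IsCut G a i.succ → b i.castSucc < b i.succ) := by
  refine ⟨fun ⟨hmono, hcut⟩ i => ⟨hmono i.castSucc_le_succ, hcut i.castSucc_lt_succ⟩, fun h => ?_⟩
  have hmono : Monotone b := Fin.monotone_iff_le_succ.2 fun i => (h i).1
  refine ⟨hmono, fun i j hij hj => ?_⟩
  obtain ⟨k, rfl⟩ := j.eq_succ_of_ne_zero (Fin.ne_zero_of_lt hij)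
  exact (hmono (Fin.le_castSucc_iff.2 hij)).trans_lt ((h k).2 hj)

theorem isCompatible_iff_strictMono {n : ℕ} {b : Fin (m + 1) → Fin n} :
    IsCompatible G a b ↔ StrictMono fun i => toLex (b i, OrderDual.toDual (cutKey G a i)) := by
  rw [isCompatible_iff_forall_succ, Fin.strictMono_iff_lt_succ]
  refine forall_congr' fun i => ?_
  have hkey : cutKey G a i.castSucc ≠ cutKey G a i.succ :=
    (cutKey_injective G a).ne i.castSucc_lt_succ.ne
  rw [Prod.Lex.toLex_lt_toLex', OrderDual.toDual_lt_toDual, isCut_succ_iff]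
  constructor
  · rintro ⟨hle, hcut⟩
    exact ⟨hle, fun heq => hkey.lt_or_gt.resolve_left fun hlt => (hcut hlt).ne heq⟩
  · rintro ⟨hle, hdesc⟩
    exact ⟨hle, fun hlt => hle.lt_of_ne fun heq => (hdesc heq).not_gt hlt⟩

end CompatibleMaps

theorem card_isCompatible {m : ℕ} {G : SimpleGraph (Fin (m + 1))} (a : Equiv.Perm (Fin (m + 1)))
    (n : ℕ) : Nat.card {b : Fin (m + 1) → Fin n // IsCompatible G a b} =
      (n + (m + 1) - numCuts G a).choose (m + 1) := by
  classical
  have hcuts : numCuts G a + #{i : Fin m | ¬ IsCut G a i.succ} = m + 1 := by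
    rw [numCuts, Nat.card_eq_fintype_card, Fintype.card_subtype]
    have h := card_filter_add_card_filter_not (s := univ) (IsCut G a)
    rwa [card_univ, Fintype.card_fin, Fin.card_filter_univ_succ (fun j => ¬ IsCut G a j),
      if_neg (not_not.2 isCut_zero)] at h
  rw [Nat.card_congr (Equiv.subtypeEquivRight fun b => isCompatible_iff_forall_succ),
    card_monotone_with_strict_steps (fun i => IsCut G a i.succ) n]
  congr 1
  omega

section Colorings

variable {d n : ℕ} {G : SimpleGraph (Fin d)} {φ : Fin d → Fin n} {a : Equiv.Perm (Fin d)}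

theorem symm_lt_symm_iff_of_monotone (hφ : ∀ u v, G.Adj u v → φ u ≠ φ v)
    (ha : Monotone (φ ∘ a)) {u v : Fin d} (huv : G.Adj u v) : a.symm u < a.symm v ↔ φ u < φ v := by
  have hle : ∀ {x y : Fin d}, a.symm x ≤ a.symm y → φ x ≤ φ y := fun h => by simpa using ha h
  exact ⟨fun h => (hle h.le).lt_of_ne (hφ u v huv),
    fun h => lt_of_not_ge fun h' => (hle h').not_gt h⟩

variable (G φ) in
/-- For proper `φ`, the length of the longest path of `G` ending at `v` along which `φ` increases,
read off from any permutation sorting `φ`: it orients every edge towards its larger colour. -/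
noncomputable def colorDepth (v : Fin d) : ℕ := ell G (Tuple.sort φ) ((Tuple.sort φ).symm v)

theorem ell_eq_colorDepth (hφ : ∀ u v, G.Adj u v → φ u ≠ φ v) (ha : Monotone (φ ∘ a))
    (i : Fin d) : ell G a i = colorDepth G φ (a i) := by
  simpa [colorDepth] using ell_symm_eq_of_orient (fun u v huv =>
    (symm_lt_symm_iff_of_monotone hφ ha huv).trans
      (symm_lt_symm_iff_of_monotone hφ (Tuple.monotone_sort φ) huv).symm) (a i)

variable (G φ) in
noncomputable def sortKey (v : Fin d) : Fin n ×ₗ (ℕ ×ₗ Fin d)ᵒᵈ :=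
  toLex (φ v, OrderDual.toDual (toLex (colorDepth G φ v, v)))

theorem sortKey_injective : Function.Injective (sortKey G φ) := fun _ _ h =>
  congrArg (fun x => (ofLex (OrderDual.ofDual (ofLex x).2)).2) h

end Colorings

section CompatibleColorings

variable {m n : ℕ} {G : SimpleGraph (Fin (m + 1))} {φ : Fin (m + 1) → Fin n}
  {a : Equiv.Perm (Fin (m + 1))}

theorem isCompatible_comp_iff (hφ : ∀ u v, G.Adj u v → φ u ≠ φ v) :
    IsCompatible G a (φ ∘ a) ↔ StrictMono (sortKey G φ ∘ a) := by
  rw [isCompatible_iff_strictMono]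
  have hkey : Monotone (φ ∘ a) →
      (fun i => toLex ((φ ∘ a) i, OrderDual.toDual (cutKey G a i))) = sortKey G φ ∘ a :=
    fun ha => funext fun i => by simp [cutKey, sortKey, ell_eq_colorDepth hφ ha]
  have hfst {β : Type} [Preorder β] {c : Fin (m + 1) → β}
      (h : StrictMono fun i => toLex ((φ ∘ a) i, c i)) : Monotone (φ ∘ a) :=
    Prod.Lex.monotone_fst_ofLex.comp h.monotone
  exact ⟨fun h => hkey (hfst h) ▸ h, fun h => (hkey (hfst h)).symm ▸ h⟩

theorem IsCompatible.lt_of_adj {b : Fin (m + 1) → Fin n} (hb : IsCompatible G a b)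
    {k l : Fin (m + 1)} (hkl : k < l) (hadj : G.Adj (a k) (a l)) : b k < b l := by
  obtain ⟨hle, hdesc⟩ := Prod.Lex.toLex_lt_toLex'.1 (isCompatible_iff_strictMono.1 hb hkl)
  refine hle.lt_of_ne fun heq => (hdesc heq).not_gt ?_
  exact Prod.Lex.toLex_lt_toLex.2 (Or.inl (ell_lt_ell_of_adj hkl hadj))

theorem IsCompatible.proper {b : Fin (m + 1) → Fin n} (hb : IsCompatible G a b) :
    ∀ u v, G.Adj u v → (b ∘ a.symm) u ≠ (b ∘ a.symm) v := by
  intro u v huv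
  rcases lt_trichotomy (a.symm u) (a.symm v) with h | h | h
  · exact (hb.lt_of_adj h (by simpa using huv)).ne
  · exact absurd (a.symm.injective h) huv.ne
  · exact (hb.lt_of_adj h (by simpa using huv.symm)).ne'

end CompatibleColorings

section Bijection

variable {m : ℕ} (G : SimpleGraph (Fin (m + 1))) (n : ℕ)

def toColoring
    (x : Σ a : Equiv.Perm (Fin (m + 1)), {b : Fin (m + 1) → Fin n // IsCompatible G a b}) :
    {φ : Fin (m + 1) → Fin n // ∀ u v, G.Adj u v → φ u ≠ φ v} :=
  ⟨x.2.1 ∘ x.1.symm, x.2.2.proper⟩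

theorem toColoring_bijective : Function.Bijective (toColoring G n) := by
  constructor
  · rintro ⟨a, b, hb⟩ ⟨a', b', hb'⟩ h
    have hφ : b ∘ a.symm = b' ∘ a'.symm := congrArg Subtype.val h
    have ha : StrictMono (sortKey G (b ∘ a.symm) ∘ a) := by
      rw [← isCompatible_comp_iff hb.proper]
      simpa [Function.comp_assoc] using hb
    have ha' : StrictMono (sortKey G (b ∘ a.symm) ∘ a') := by
      rw [← isCompatible_comp_iff hb.proper, hφ]
      simpa [Function.comp_assoc] using hb'
    obtain rfl : a = a' := Equiv.ext fun i =>
      sortKey_injective (congrFun (Tuple.unique_monotone ha.monotone ha'.monotone) i)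
    obtain rfl : b = b' := by simpa [Function.comp_assoc] using congrArg (· ∘ a) hφ
    rfl
  · rintro ⟨φ, hφ⟩
    let a := Tuple.sort (sortKey G φ)
    have ha : StrictMono (sortKey G φ ∘ a) :=
      (Tuple.monotone_sort _).strictMono_of_injective (sortKey_injective.comp a.injective)
    exact ⟨⟨a, φ ∘ a, (isCompatible_comp_iff hφ).2 ha⟩, by simp [toColoring, Function.comp_assoc]⟩

end Bijection

end ChromaticCuts

theorem chromVal_eq_sum_choose_general {d : ℕ} (G : SimpleGraph (Fin d)) (n : ℕ) :
    chromVal G n = ∑ π : Equiv.Perm (Fin d), Nat.choose (n + d - numCuts G π) d := by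
  cases d with
  | zero => simp [chromVal]
  | succ m =>
    rw [chromVal, ← Nat.card_eq_of_bijective _ (ChromaticCuts.toColoring_bijective G n),
      Nat.card_sigma]
    exact Finset.sum_congr rfl fun a _ => ChromaticCuts.card_isCompatible a n

/-- `χ_G(n) = Σ_{π ∈ S_d} C(n + d − c(π), d)`. -/
theorem chromVal_eq_sum_choose {d : ℕ} (hd : 1 ≤ d) (G : SimpleGraph (Fin d)) (n : ℕ) :
    chromVal G n = ∑ π : Equiv.Perm (Fin d), Nat.choose (n + d - numCuts G π) d :=
  chromVal_eq_sum_choose_general G n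
end

section
/- The polynomial Σ_{π ∈ S_d} t^{c(π)} is independent of the labeling of G: if σ is any permutation of [d] and G^σ is the graph in which σ(u) and σ(v) are adjacent exactly when u and v are adjacent in G, then for every integer j the number of permutations π of [d] with c_{G^σ}(π) = j equals the number of permutations π with c_G(π) = j. -/
/-!
Adjacent transpositions generate the symmetric group, so it suffices to relabel `G` along
`s = swap m (m + 1)`. For that case, send `π` to `s * π` (swap the values `m, m + 1`) unless these
two values stand at consecutive positions with equal `ℓ`, in which case keep `π`. Relabelling the
values transports `ℓ` unchanged, and the only comparison `a_k < a_{k+1}` it can flip is the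
excluded tie. In a tie the two entries are non-adjacent (adjacency forces `ℓ` to increase), so
swapping their positions changes no `ℓ` and the relabelled graph has the same `ℓ` on `π`.
The same construction for the relabelled graph inverts this map, which preserves the number of
cuts.
-/

open Equiv

section

variable {d : ℕ}

lemma ell_congr {G H : SimpleGraph (Fin d)} {a b : Perm (Fin d)}
    (h : ∀ i j, G.Adj (a i) (a j) ↔ H.Adj (b i) (b j)) : ell G a = ell H b := by
  ext k
  unfold ell ellSpec
  simp only [h]

lemma ell_comap (G : SimpleGraph (Fin d)) (τ π : Perm (Fin d)) :
    ell (G.comap τ) π = ell G (τ * π) :=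
  ell_congr fun _ _ => Iff.rfl

lemma bddAbove_setOf_ellSpec (G : SimpleGraph (Fin d)) (a : Perm (Fin d)) (k : Fin d) :
    BddAbove {p | ellSpec G a k p} :=
  ⟨d, fun p ⟨c, hc, _⟩ => (Fin.le_of_injective c hc.injective).trans' p.le_succ⟩

lemma ellSpec_ell (G : SimpleGraph (Fin d)) (a : Perm (Fin d)) (k : Fin d) :
    ellSpec G a k (ell G a k) :=
  Nat.sSup_mem
    ⟨0, show ellSpec G a k 0 from ⟨fun _ => k, Fin.strictMono_iff_lt_succ.2 finZeroElim, rfl,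
      finZeroElim⟩⟩
    (bddAbove_setOf_ellSpec G a k)

lemma le_ell {G : SimpleGraph (Fin d)} {a : Perm (Fin d)} {k : Fin d} {p : ℕ}
    (h : ellSpec G a k p) : p ≤ ell G a k :=
  le_csSup (bddAbove_setOf_ellSpec G a k) h

lemma ell_lt_ell_of_adj {G : SimpleGraph (Fin d)} {a : Perm (Fin d)} {i j : Fin d}
    (hij : i < j) (hadj : G.Adj (a i) (a j)) : ell G a i < ell G a j := by
  obtain ⟨c, hc, hci, hcadj⟩ := ellSpec_ell G a i
  refine Nat.lt_of_succ_le (le_ell ⟨Fin.snoc c j, ?_, by simp, fun t => ?_⟩)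
  · refine Fin.strictMono_iff_lt_succ.2 fun t => ?_
    induction t using Fin.lastCases with
    | last => simpa [hci] using hij
    | cast t =>
      rw [Fin.succ_castSucc, Fin.snoc_castSucc, Fin.snoc_castSucc]
      exact hc Fin.castSucc_lt_succ
  · induction t using Fin.lastCases with
    | last => simpa [hci] using hadj
    | cast t =>
      rw [Fin.succ_castSucc, Fin.snoc_castSucc, Fin.snoc_castSucc]
      exact hcadj t

lemma swap_lt_swap_iff {m m' x y : Fin d} (hm : (m : ℕ) + 1 = m') (hxy : swap m m' x ≠ y) :
    swap m m' x < swap m m' y ↔ x < y := by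
  simp only [swap_apply_def] at hxy ⊢
  split_ifs at hxy ⊢ <;> simp only [Fin.lt_def, Fin.ext_iff] at * <;> omega

lemma ellSpec_of_ellSpec_mul_swap {G : SimpleGraph (Fin d)} {a : Perm (Fin d)} {i₀ i₁ k : Fin d}
    {p : ℕ} (h01 : (i₀ : ℕ) + 1 = i₁) (hna : ¬G.Adj (a i₀) (a i₁))
    (h : ellSpec G (a * swap i₀ i₁) k p) : ellSpec G a (swap i₀ i₁ k) p := by
  obtain ⟨c, hc, rfl, hadj⟩ := h
  refine ⟨swap i₀ i₁ ∘ c, Fin.strictMono_iff_lt_succ.2 fun t =>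
    (swap_lt_swap_iff h01 fun hswap => ?_).2 (hc Fin.castSucc_lt_succ), rfl, hadj⟩
  have hne : swap i₀ i₁ (c t.castSucc) ≠ c t.castSucc :=
    hswap ▸ (hc Fin.castSucc_lt_succ).ne'
  have hadj' := hadj t
  rw [Perm.mul_apply, Perm.mul_apply, ← hswap, swap_apply_self] at hadj'
  rcases (swap_apply_ne_self_iff.1 hne).2 with h | h <;> rw [h] at hadj'
  · exact hna (by simpa using hadj'.symm)
  · exact hna (by simpa using hadj')

lemma ell_mul_swap {G : SimpleGraph (Fin d)} {a : Perm (Fin d)} {i₀ i₁ : Fin d}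
    (h01 : (i₀ : ℕ) + 1 = i₁) (hna : ¬G.Adj (a i₀) (a i₁)) (k : Fin d) :
    ell G (a * swap i₀ i₁) k = ell G a (swap i₀ i₁ k) := by
  refine congrArg sSup (Set.ext fun p => ⟨ellSpec_of_ellSpec_mul_swap h01 hna, fun h => ?_⟩)
  have hna' : ¬G.Adj ((a * swap i₀ i₁) i₀) ((a * swap i₀ i₁) i₁) := by
    simpa using hna ∘ .symm
  simpa [mul_assoc] using ellSpec_of_ellSpec_mul_swap h01 hna' (k := swap i₀ i₁ k)
    (by rwa [mul_assoc, swap_mul_self, mul_one])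

lemma swap_eq_swap_of_swap_apply_eq {a b x y : Fin d} (hxy : x ≠ y) (h : swap a b x = y) :
    swap x y = swap a b := by
  subst h
  rcases (swap_apply_ne_self_iff.1 hxy.symm).2 with rfl | rfl
  · rw [swap_apply_left]
  · rw [swap_apply_right, swap_comm]

lemma numCuts_congr {G H : SimpleGraph (Fin d)} {a b : Perm (Fin d)} (hell : ell G a = ell H b)
    (hlt : ∀ i j : Fin d, (i : ℕ) + 1 = j → ell G a i = ell G a j →
      (a i < a j ↔ b i < b j)) :
    numCuts G a = numCuts H b := by
  refine Nat.card_congr (Equiv.subtypeEquivRight fun k => ?_)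
  refine or_congr_right (exists_congr fun i => and_congr_right fun hik => ?_)
  rw [← hell]
  exact or_congr_right (and_congr_right (hlt i k hik))

/-- `swap m m' (π i) = π j` encodes `{π i, π j} = {m, m'}`, since `π i ≠ π j`. -/
def IsTiedAt (G : SimpleGraph (Fin d)) (m m' : Fin d) (π : Perm (Fin d)) : Prop :=
  ∃ i j : Fin d, (i : ℕ) + 1 = j ∧ swap m m' (π i) = π j ∧ ell G π i = ell G π j

lemma ell_comap_swap_of_isTiedAt {G : SimpleGraph (Fin d)} {m m' : Fin d} {π : Perm (Fin d)}
    (h : IsTiedAt G m m' π) : ell (G.comap (swap m m')) π = ell G π := by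
  obtain ⟨i, j, hij, hval, htie⟩ := h
  have hlt : i < j := Fin.lt_def.2 (by omega)
  have hna : ¬G.Adj (π i) (π j) := fun hadj => (ell_lt_ell_of_adj hlt hadj).ne htie
  have hs : swap m m' * π = π * swap i j := by
    rw [mul_swap_eq_swap_mul, swap_eq_swap_of_swap_apply_eq (π.injective.ne hlt.ne) hval]
  ext k
  rw [ell_comap, hs, ell_mul_swap hij hna, swap_apply_def]
  split_ifs with hki hkj
  · rw [hki, htie]
  · rw [hkj, htie]
  · rfl

lemma IsTiedAt.comap_swap {G : SimpleGraph (Fin d)} {m m' : Fin d} {π : Perm (Fin d)}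
    (h : IsTiedAt G m m' π) : IsTiedAt (G.comap (swap m m')) m m' π := by
  rwa [IsTiedAt, ell_comap_swap_of_isTiedAt h]

lemma isTiedAt_comap_swap_swap_mul_iff {G : SimpleGraph (Fin d)} {m m' : Fin d}
    {π : Perm (Fin d)} :
    IsTiedAt (G.comap (swap m m')) m m' (swap m m' * π) ↔ IsTiedAt G m m' π := by
  simp only [IsTiedAt, ell_comap, swap_mul_self_mul, Perm.mul_apply, swap_apply_self,
    swap_apply_eq_iff]

open Classical in
noncomputable def swapUnlessTied (G : SimpleGraph (Fin d)) (m m' : Fin d) (π : Perm (Fin d)) :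
    Perm (Fin d) :=
  if IsTiedAt G m m' π then π else swap m m' * π

lemma numCuts_comap_swapUnlessTied {G : SimpleGraph (Fin d)} {m m' : Fin d}
    (hm : (m : ℕ) + 1 = m') (π : Perm (Fin d)) :
    numCuts (G.comap (swap m m')) (swapUnlessTied G m m' π) = numCuts G π := by
  unfold swapUnlessTied
  split_ifs with h
  · exact numCuts_congr (ell_comap_swap_of_isTiedAt h) fun _ _ _ _ => Iff.rfl
  · refine numCuts_congr (by rw [ell_comap, swap_mul_self_mul]) fun i j hij htie =>
      swap_lt_swap_iff hm fun hval => h ⟨i, j, hij, hval, ?_⟩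
    simpa [ell_comap] using htie

lemma swapUnlessTied_comap_swap_swapUnlessTied (G : SimpleGraph (Fin d)) (m m' : Fin d)
    (π : Perm (Fin d)) :
    swapUnlessTied (G.comap (swap m m')) m m' (swapUnlessTied G m m' π) = π := by
  unfold swapUnlessTied
  by_cases h : IsTiedAt G m m' π
  · rw [if_pos h, if_pos h.comap_swap]
  · rw [if_neg h, if_neg (isTiedAt_comap_swap_swap_mul_iff.not.2 h), swap_mul_self_mul]

lemma comap_swap_comap_swap (G : SimpleGraph (Fin d)) (m m' : Fin d) :
    (G.comap (swap m m')).comap (swap m m') = G := by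
  ext
  simp

lemma card_numCuts_comap_swap (G : SimpleGraph (Fin d)) {m m' : Fin d}
    (hm : (m : ℕ) + 1 = m') (j : ℕ) :
    Nat.card {π : Perm (Fin d) // numCuts (G.comap (swap m m')) π = j} =
      Nat.card {π : Perm (Fin d) // numCuts G π = j} := by
  let e : Perm (Fin d) ≃ Perm (Fin d) :=
    { toFun := swapUnlessTied G m m'
      invFun := swapUnlessTied (G.comap (swap m m')) m m'
      left_inv := swapUnlessTied_comap_swap_swapUnlessTied G m m'
      right_inv := fun π => by
        simpa only [comap_swap_comap_swap] using
          swapUnlessTied_comap_swap_swapUnlessTied (G.comap (swap m m')) m m' π }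
  refine (Nat.card_congr (e.subtypeEquiv fun π => ?_)).symm
  rw [← numCuts_comap_swapUnlessTied hm π]
  rfl

lemma card_numCuts_comap (G : SimpleGraph (Fin d)) (σ : Perm (Fin d)) (j : ℕ) :
    Nat.card {π : Perm (Fin d) // numCuts (G.comap σ) π = j} =
      Nat.card {π : Perm (Fin d) // numCuts G π = j} := by
  cases d with
  | zero => rw [show G.comap σ = G by ext u; exact u.elim0]
  | succ n =>
    have hσ : σ ∈ Submonoid.closure (Set.range fun i : Fin n => swap i.castSucc i.succ) := by
      simp [Perm.mclosure_swap_castSucc_succ]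
    induction hσ using Submonoid.closure_induction generalizing G with
    | mem _ h =>
      obtain ⟨i, rfl⟩ := h
      exact card_numCuts_comap_swap G (by simp) j
    | one => rfl
    | mul x y _ _ hx hy => rw [Perm.coe_mul, ← SimpleGraph.comap_comap, hy, hx]

end

theorem numCuts_distribution_relabel_invariant_general {d : ℕ}
    (G H : SimpleGraph (Fin d)) (σ : Equiv.Perm (Fin d))
    (hH : ∀ u v : Fin d, H.Adj (σ u) (σ v) ↔ G.Adj u v) (j : ℕ) :
    Nat.card {π : Equiv.Perm (Fin d) // numCuts H π = j} =
      Nat.card {π : Equiv.Perm (Fin d) // numCuts G π = j} := by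
  obtain rfl : G = H.comap σ := by
    ext u v
    exact (hH u v).symm
  exact (card_numCuts_comap H σ j).symm

/-- The cut-generating polynomial `Σ_{π ∈ S_d} t^{c(π)}` is
independent of the labeling of `G`: if `H` is the relabeling of `G` along a
permutation `σ` of the vertices (so `σ u` and `σ v` are adjacent in `H` exactly when
`u` and `v` are adjacent in `G`), then for every `j` the number of permutations with
exactly `j` cuts is the same for `H` as for `G`. -/
theorem numCuts_distribution_relabel_invariant {d : ℕ} (hd : 1 ≤ d)
    (G H : SimpleGraph (Fin d)) (σ : Equiv.Perm (Fin d))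
    (hH : ∀ u v : Fin d, H.Adj (σ u) (σ v) ↔ G.Adj u v) (j : ℕ) :
    Nat.card {π : Equiv.Perm (Fin d) // numCuts H π = j} =
      Nat.card {π : Equiv.Perm (Fin d) // numCuts G π = j} :=
  numCuts_distribution_relabel_invariant_general G H σ hH j
end

section
/- For 1 ≤ m ≤ d let P_m denote the number of chains ∅ = S_0 ⊊ S_1 ⊊ ⋯ ⊊ S_{m−1} ⊊ S_m = [d] of subsets of [d] such that at least one difference set S_i∖S_{i−1} (1 ≤ i ≤ m) contains two adjacent vertices of G. Then for every integer n ≥ 0, the tail of the chromatic polynomial satisfies n^d − χ_G(n) = Σ_{m=1}^{d} P_m · C(n, m), where C(n,m) is the binomial coefficient; that is, the number of functions φ : [d] → {1, …, n} that are not proper colorings of G equals Σ_{m=1}^{d} P_m · C(n, m). -/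
open Finset

variable {d : ℕ} (G : SimpleGraph (Fin d))

def BadSurj (G : SimpleGraph (Fin d)) (m : ℕ) : Type :=
  {f : Fin d → Fin m // Function.Surjective f ∧ ∃ u v, G.Adj u v ∧ f u = f v}

abbrev ChainT (G : SimpleGraph (Fin d)) (m : ℕ) : Type :=
  {S : ℕ → Finset (Fin d) //
    S 0 = ∅ ∧ (∀ i, m ≤ i → S i = Finset.univ) ∧ (∀ i, i < m → S i ⊂ S (i + 1)) ∧
    ∃ i < m, ∃ u v, G.Adj u v ∧ u ∈ S (i + 1) \ S i ∧ v ∈ S (i + 1) \ S i}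

def toChain {m : ℕ} (f : BadSurj G m) : ChainT G m := by
  refine ⟨fun i => univ.filter (fun x => (f.1 x : ℕ) < i), ?_, ?_, ?_, ?_⟩
  · ext x; simp
  · intro i hi; ext x; simp only [mem_filter, mem_univ, true_and, iff_true]
    exact lt_of_lt_of_le (f.1 x).isLt hi
  · intro i hi
    constructor
    · intro x hx; simp only [mem_filter, mem_univ, true_and] at hx ⊢; omega
    · intro hsub
      obtain ⟨x, hx⟩ := f.2.1 ⟨i, hi⟩
      have := hsub (by simp [hx] : x ∈ univ.filter (fun x => (f.1 x : ℕ) < i + 1))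
      simp [hx] at this
  · obtain ⟨u, v, huv, he⟩ := f.2.2
    exact ⟨(f.1 u : ℕ), (f.1 u).isLt, u, v, huv, by simp, by simp [← he]⟩

lemma toChain_bij (m : ℕ) : Function.Bijective (toChain G (m := m)) := by
  constructor
  · rintro ⟨f, hf⟩ ⟨g, hg⟩ h
    simp only [toChain, Subtype.mk.injEq] at h
    have hfg : f = g := by
      funext x
      have h1 := congrArg (fun S => x ∈ S ((f x : ℕ) + 1)) h
      have h2 := congrArg (fun S => x ∈ S ((g x : ℕ) + 1)) h
      simp at h1 h2
      exact Fin.ext (by omega)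
    exact Subtype.ext hfg
  · rintro ⟨S, h0, hm, hss, hbad⟩
    have mono : ∀ a, S a ⊆ S (a + 1) := by
      intro a
      by_cases ha : a < m
      · exact (hss a ha).subset
      · rw [hm a (by omega), hm (a+1) (by omega)]
    have mono' : ∀ a b, a ≤ b → S a ⊆ S b := by
      intro a b hab
      induction b, hab using Nat.le_induction with
      | base => exact subset_rfl
      | succ b hab ih => exact ih.trans (mono b)
    have hne : ∀ x : Fin d, ({i | x ∈ S i} : Set ℕ).Nonempty := by
      intro x; exact ⟨m, by simp [hm m le_rfl]⟩
    set J : Fin d → ℕ := fun x => sInf {i | x ∈ S i} with hJ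
    have hJmem : ∀ x, x ∈ S (J x) := fun x => Nat.sInf_mem (hne x)
    have hJle : ∀ x i, x ∈ S i → J x ≤ i := fun x i h => Nat.sInf_le h
    have hJpos : ∀ x, 1 ≤ J x := by
      intro x
      by_contra h
      have h' : J x = 0 := by omega
      have := hJmem x
      rw [h', h0] at this
      simp at this
    have hJm : ∀ x, J x ≤ m := fun x => hJle x m (by simp [hm m le_rfl])
    have key : ∀ i x, x ∈ S i ↔ J x ≤ i := by
      intro i x
      exact ⟨hJle x i, fun h => mono' _ _ h (hJmem x)⟩
    refine ⟨⟨fun x => ⟨J x - 1, by have := hJpos x; have := hJm x; omega⟩, ?_, ?_⟩, ?_⟩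
    · intro k
      obtain ⟨x, hx1, hx2⟩ := exists_of_ssubset (hss k k.isLt)
      rw [key] at hx1
      rw [key] at hx2
      exact ⟨x, Fin.ext (by simp; omega)⟩
    · obtain ⟨i, hi, u, v, huv, hu, hv⟩ := hbad
      rw [mem_sdiff, key, key] at hu hv
      exact ⟨u, v, huv, Fin.ext (by simp; omega)⟩
    · apply Subtype.ext
      funext i
      ext x
      simp only [toChain, mem_filter, mem_univ, true_and, key, hJpos x]
      have := hJpos x
      omega

lemma card_chains (m : ℕ) : Nat.card (ChainT G m) = Nat.card (BadSurj G m) :=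
  (Nat.card_eq_of_bijective _ (toChain_bij G m)).symm

lemma card_badsurj_zero (hd : 1 ≤ d) {m : ℕ} (h : m = 0 ∨ d < m) :
    Nat.card (BadSurj G m) = 0 := by
  have : IsEmpty (BadSurj G m) := by
    constructor
    rintro ⟨f, hsurj, -⟩
    rcases h with h | h
    · subst h; exact (f ⟨0, hd⟩).elim0
    · have := Fintype.card_le_of_surjective f hsurj
      simp at this; omega
  exact Nat.card_of_isEmpty


noncomputable def ofBadSurj {n : ℕ} (T : Finset (Fin n)) (f : BadSurj G T.card) :
    {φ : Fin d → Fin n // (¬ ∀ u v : Fin d, G.Adj u v → φ u ≠ φ v) ∧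
      Finset.image φ Finset.univ = T} := by
  refine ⟨fun x => (T.equivFin.symm (f.1 x) : Fin n), ?_, ?_⟩
  · push_neg
    obtain ⟨u, v, huv, he⟩ := f.2.2
    exact ⟨u, v, huv, by rw [he]⟩
  · ext t
    simp only [mem_image, mem_univ, true_and]
    constructor
    · rintro ⟨x, rfl⟩; exact (T.equivFin.symm (f.1 x)).2
    · intro ht
      obtain ⟨x, hx⟩ := f.2.1 (T.equivFin ⟨t, ht⟩)
      exact ⟨x, by rw [hx, Equiv.symm_apply_apply]⟩

lemma ofBadSurj_bij {n : ℕ} (T : Finset (Fin n)) : Function.Bijective (ofBadSurj G T) := by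
  constructor
  · rintro ⟨f, hf⟩ ⟨g, hg⟩ h
    have h' : ∀ x, ((T.equivFin.symm (f x) : {t // t ∈ T}) : Fin n)
        = ((T.equivFin.symm (g x) : {t // t ∈ T}) : Fin n) := fun x =>
      congrFun (congrArg Subtype.val h) x
    refine Subtype.ext (funext fun x => ?_)
    exact T.equivFin.symm.injective (Subtype.ext (h' x))
  · rintro ⟨φ, hbad, himg⟩
    have hmem : ∀ x, φ x ∈ T := by
      intro x
      have h1 : φ x ∈ Finset.image φ Finset.univ := mem_image_of_mem _ (mem_univ x)
      rwa [himg] at h1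
    have hsurj : Function.Surjective (fun x => T.equivFin ⟨φ x, hmem x⟩) := by
      intro k
      have ht : (T.equivFin.symm k : Fin n) ∈ Finset.image φ Finset.univ := by
        rw [himg]; exact (T.equivFin.symm k).2
      obtain ⟨x, -, hx⟩ := mem_image.mp ht
      refine ⟨x, ?_⟩
      have h2 : (⟨φ x, hmem x⟩ : {t // t ∈ T}) = T.equivFin.symm k := Subtype.ext hx
      show T.equivFin ⟨φ x, hmem x⟩ = k
      rw [h2, Equiv.apply_symm_apply]
    have hbad' : ∃ u v, G.Adj u v ∧ (fun x => T.equivFin ⟨φ x, hmem x⟩) u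
        = (fun x => T.equivFin ⟨φ x, hmem x⟩) v := by
      push_neg at hbad
      obtain ⟨u, v, huv, he⟩ := hbad
      exact ⟨u, v, huv, congrArg T.equivFin (Subtype.ext he)⟩
    refine ⟨⟨fun x => T.equivFin ⟨φ x, hmem x⟩, hsurj, hbad'⟩, ?_⟩
    refine Subtype.ext (funext fun x => ?_)
    show ((T.equivFin.symm (T.equivFin ⟨φ x, hmem x⟩) : {t // t ∈ T}) : Fin n) = φ x
    rw [Equiv.symm_apply_apply]

lemma card_fiber {n : ℕ} (T : Finset (Fin n)) :
    Nat.card {φ : Fin d → Fin n // (¬ ∀ u v : Fin d, G.Adj u v → φ u ≠ φ v) ∧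
      Finset.image φ Finset.univ = T} = Nat.card (BadSurj G T.card) :=
  (Nat.card_eq_of_bijective _ (ofBadSurj_bij G T)).symm

lemma sum_group {d n : ℕ} (P : ℕ → ℕ) (hP0 : P 0 = 0) (hPd : ∀ m, d < m → P m = 0) :
    ∑ T : Finset (Fin n), P T.card = ∑ m ∈ Finset.Icc 1 d, P m * Nat.choose n m := by
  have h4 : ∑ T : Finset (Fin n), P T.card
      = ∑ m ∈ Finset.range (n + 1), n.choose m * P m := by
    rw [← Finset.powerset_univ, Finset.sum_powerset]
    refine Finset.sum_congr (by simp) fun j hj => ?_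
    rw [Finset.sum_congr rfl (fun T hT => by
      rw [Finset.mem_powersetCard_univ.mp hT]), Finset.sum_const,
      Finset.card_powersetCard, smul_eq_mul]
    simp
  rw [h4]
  have hsub1 : Finset.range (n + 1) ⊆ Finset.range (max (n + 1) (d + 1)) := by
    intro x hx
    simp only [Finset.mem_range] at hx ⊢
    omega
  have hsub2 : Finset.Icc 1 d ⊆ Finset.range (max (n + 1) (d + 1)) := by
    intro x hx
    simp only [Finset.mem_Icc] at hx
    simp only [Finset.mem_range]
    omega
  rw [Finset.sum_subset hsub1 (fun x hx hx' => by
    have hnx : n < x := by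
      simp only [Finset.mem_range] at hx hx'
      omega
    simp [Nat.choose_eq_zero_of_lt hnx])]
  rw [Finset.sum_subset hsub2 (fun x hx hx' => by
    simp only [Finset.mem_Icc, not_and_or, not_le] at hx'
    rcases hx' with h | h
    · have : x = 0 := by omega
      simp [this, hP0]
    · simp [hPd x h])]
  exact Finset.sum_congr rfl fun x _ => Nat.mul_comm _ _

def Fib {d : ℕ} (G : SimpleGraph (Fin d)) (n : ℕ) (T : Finset (Fin n)) : Type :=
  {φ : Fin d → Fin n // (¬ ∀ u v : Fin d, G.Adj u v → φ u ≠ φ v) ∧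
    Finset.image φ Finset.univ = T}

theorem tail_main {d : ℕ} (hd : 1 ≤ d) (G : SimpleGraph (Fin d))
    (P : ℕ → ℕ)
    (hP : ∀ m, P m = Nat.card {S : ℕ → Finset (Fin d) //
      S 0 = ∅ ∧ (∀ i, m ≤ i → S i = Finset.univ) ∧ (∀ i, i < m → S i ⊂ S (i + 1)) ∧
      ∃ i < m, ∃ u v, G.Adj u v ∧ u ∈ S (i + 1) \ S i ∧ v ∈ S (i + 1) \ S i})
    (n : ℕ) :
    Nat.card {φ : Fin d → Fin n // ¬ ∀ u v : Fin d, G.Adj u v → φ u ≠ φ v} =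
      ∑ m ∈ Finset.Icc 1 d, P m * Nat.choose n m := by
  classical
  have hPm : ∀ m, P m = Nat.card (BadSurj G m) := by
    intro m
    rw [hP m]
    exact card_chains G m
  have e1 : {φ : Fin d → Fin n // ¬ ∀ u v : Fin d, G.Adj u v → φ u ≠ φ v} ≃
      Σ T : Finset (Fin n), Fib G n T :=
    (Equiv.sigmaFiberEquiv
        (fun φ : {φ : Fin d → Fin n // ¬ ∀ u v : Fin d, G.Adj u v → φ u ≠ φ v} =>
          Finset.image φ.1 Finset.univ)).symm.trans
      (Equiv.sigmaCongrRight fun T =>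
        Equiv.subtypeSubtypeEquivSubtypeInter
          (fun φ : Fin d → Fin n => ¬ ∀ u v : Fin d, G.Adj u v → φ u ≠ φ v)
          (fun φ => Finset.image φ Finset.univ = T))
  haveI : ∀ T, Finite (Fib G n T) := by
    intro T
    exact Finite.of_injective (fun x : Fib G n T => x.1) (fun a b h => Subtype.ext h)
  haveI : ∀ T, Fintype (Fib G n T) := fun T => Fintype.ofFinite _
  have h2 : Nat.card {φ : Fin d → Fin n // ¬ ∀ u v : Fin d, G.Adj u v → φ u ≠ φ v} =
      ∑ T : Finset (Fin n), Nat.card (Fib G n T) := by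
    rw [Nat.card_congr e1, Nat.card_eq_fintype_card, Fintype.card_sigma]
    simp [Nat.card_eq_fintype_card]
  have h3 : ∀ T : Finset (Fin n), Nat.card (Fib G n T) = P T.card := by
    intro T
    exact (card_fiber G T).trans (hPm T.card).symm
  rw [h2, Finset.sum_congr rfl (fun T _ => h3 T)]
  refine sum_group P ?_ ?_
  · rw [hPm]; exact card_badsurj_zero G hd (Or.inl rfl)
  · intro m hm
    rw [hPm]; exact card_badsurj_zero G hd (Or.inr hm)

theorem tail_of_chromatic_polynomial' {d : ℕ} (hd : 1 ≤ d) (G : SimpleGraph (Fin d))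
    (P : ℕ → ℕ)
    (hP : ∀ m, P m = Nat.card {S : ℕ → Finset (Fin d) //
      S 0 = ∅ ∧ (∀ i, m ≤ i → S i = Finset.univ) ∧ (∀ i, i < m → S i ⊂ S (i + 1)) ∧
      ∃ i < m, ∃ u v, G.Adj u v ∧ u ∈ S (i + 1) \ S i ∧ v ∈ S (i + 1) \ S i})
    (n : ℕ) :
    n ^ d - Nat.card {φ : Fin d → Fin n // ∀ u v : Fin d, G.Adj u v → φ u ≠ φ v}
      = ∑ m ∈ Finset.Icc 1 d, P m * Nat.choose n m ∧
    Nat.card {φ : Fin d → Fin n // ¬ ∀ u v : Fin d, G.Adj u v → φ u ≠ φ v} =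
      ∑ m ∈ Finset.Icc 1 d, P m * Nat.choose n m := by
  classical
  have h2 := tail_main hd G P hP n
  refine ⟨?_, h2⟩
  rw [← h2, Nat.card_eq_fintype_card, Nat.card_eq_fintype_card,
    Fintype.card_subtype_compl]
  congr 1
  rw [Fintype.card_fun]
  simp



/-- For `1 ≤ m ≤ d` let `P m` be the number of chains
`∅ = S 0 ⊊ S 1 ⊊ ⋯ ⊊ S m = [d]` such that some difference set `S (i+1) ∖ S i`
contains two adjacent vertices of `G` (chains are encoded by functions
`S : ℕ → Finset (Fin d)` normalized to be `univ` from index `m` onwards).  Then for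
every `n ≥ 0` the tail of the chromatic polynomial satisfies
`n^d − χ_G(n) = Σ_{m=1}^{d} P m · C(n, m)`; that is, the number of functions
`φ : [d] → [n]` that are not proper colorings of `G` equals `Σ_{m=1}^{d} P m · C(n, m)`. -/
theorem tail_of_chromatic_polynomial {d : ℕ} (hd : 1 ≤ d) (G : SimpleGraph (Fin d))
    (P : ℕ → ℕ)
    (hP : ∀ m, P m = Nat.card {S : ℕ → Finset (Fin d) //
      S 0 = ∅ ∧ (∀ i, m ≤ i → S i = Finset.univ) ∧ (∀ i, i < m → S i ⊂ S (i + 1)) ∧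
      ∃ i < m, ∃ u v, G.Adj u v ∧ u ∈ S (i + 1) \ S i ∧ v ∈ S (i + 1) \ S i})
    (n : ℕ) :
    n ^ d - chromVal G n = ∑ m ∈ Finset.Icc 1 d, P m * Nat.choose n m ∧
    Nat.card {φ : Fin d → Fin n // ¬ ∀ u v : Fin d, G.Adj u v → φ u ≠ φ v} =
      ∑ m ∈ Finset.Icc 1 d, P m * Nat.choose n m := by
  exact tail_of_chromatic_polynomial' hd G P hP n
end

section
/- Assume d ≥ 3. Every face-chain ∅ ⊊ S_1 ⊊ ⋯ ⊊ S_k ⊊ [d] of G is a subchain of some face-chain of length d−2, i.e., there is a maximal chain of d−2 proper nonempty subsets that is a face-chain of G and contains {S_1, …, S_k} as a subset. In particular, if G has at least one edge, the coloring complex Δ_G is pure of dimension d−3. -/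
/-- Let `d ≥ 3`.  Every face-chain `∅ ⊊ S 1 ⊊ ⋯ ⊊ S k ⊊ [d]` of `G`
(a chain some of whose difference sets contains two adjacent vertices of `G`) is a
subchain of a face-chain of maximal length `d − 2`: there is a maximal chain
`∅ = T 0 ⊊ T 1 ⊊ ⋯ ⊊ T (d-2) ⊊ T (d-1) = [d]` which is a face-chain of `G` and
contains every `S j` (`1 ≤ j ≤ k`) among its proper nonempty members.  In particular,
if `G` has an edge, the coloring complex `Δ_G` is pure of dimension `d − 3`. -/
theorem face_chain_extends_to_facet {d k : ℕ} (hd : 3 ≤ d) (hk : 1 ≤ k)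
    (G : SimpleGraph (Fin d)) (S : ℕ → Finset (Fin d))
    (hS0 : S 0 = ∅) (hSl : S (k + 1) = Finset.univ)
    (hchain : ∀ i, i ≤ k → S i ⊂ S (i + 1))
    (hface : ∃ i ≤ k, ∃ u v, G.Adj u v ∧ u ∈ S (i + 1) \ S i ∧ v ∈ S (i + 1) \ S i) :
    ∃ T : ℕ → Finset (Fin d), T 0 = ∅ ∧ T (d - 1) = Finset.univ ∧
      (∀ i, i ≤ d - 2 → T i ⊂ T (i + 1)) ∧
      (∃ i ≤ d - 2, ∃ u v, G.Adj u v ∧ u ∈ T (i + 1) \ T i ∧ v ∈ T (i + 1) \ T i) ∧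
      (∀ j, 1 ≤ j → j ≤ k → ∃ i, 1 ≤ i ∧ i ≤ d - 2 ∧ S j = T i) := by
  classical
  obtain ⟨i₀, hi₀, u, v, huv, hu, hv⟩ := hface
  have hune : u ≠ v := huv.ne
  -- monotonicity of the chain
  have hsub : ∀ i, i ≤ k → S i ⊆ S (i + 1) := fun i hi => (hchain i hi).subset
  have hmono : ∀ a b, a ≤ b → b ≤ k + 1 → S a ⊆ S b := by
    intro a b hab hbk
    induction b with
    | zero =>
      have : a = 0 := Nat.le_zero.mp hab
      subst this; exact subset_rfl
    | succ n ih =>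
      rcases Nat.eq_or_lt_of_le hab with h | h
      · exact h ▸ subset_rfl
      · exact (ih (Nat.lt_succ_iff.mp h) (by omega)).trans (hsub n (by omega))
  -- the layer function
  obtain ⟨lam, hlamlt⟩ : ∃ lam : Fin d → ℕ, ∀ x j, j ≤ k + 1 → (lam x < j ↔ x ∈ S j) := by
    have hex : ∀ x : Fin d, ∃ j, x ∈ S (j + 1) :=
      fun x => ⟨k, by rw [hSl]; exact Finset.mem_univ x⟩
    refine ⟨fun x => Nat.find (hex x), fun x j hj => ?_⟩
    constructor
    · intro h
      exact hmono (Nat.find (hex x) + 1) j h hj (Nat.find_spec (hex x))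
    · intro hx
      cases j with
      | zero => rw [hS0] at hx; exact absurd hx (Finset.notMem_empty x)
      | succ m => exact Nat.lt_succ_of_le (Nat.find_min' (hex x) hx)
  have hu1 : u ∈ S (i₀ + 1) := (Finset.mem_sdiff.mp hu).1
  have hu2 : u ∉ S i₀ := (Finset.mem_sdiff.mp hu).2
  have hv1 : v ∈ S (i₀ + 1) := (Finset.mem_sdiff.mp hv).1
  have hv2 : v ∉ S i₀ := (Finset.mem_sdiff.mp hv).2
  have hlamu : lam u = i₀ := by
    have h1 := (hlamlt u (i₀ + 1) (by omega)).mpr hu1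
    have h2 : ¬ lam u < i₀ := fun h => hu2 ((hlamlt u i₀ (by omega)).mp h)
    omega
  have hlamv : lam v = i₀ := by
    have h1 := (hlamlt v (i₀ + 1) (by omega)).mpr hv1
    have h2 : ¬ lam v < i₀ := fun h => hv2 ((hlamlt v i₀ (by omega)).mp h)
    omega
  -- the key function
  obtain ⟨key, K1, K3, K4⟩ : ∃ key : Fin d → ℕ,
      (∀ x y, lam y < lam x → key y < key x) ∧
      Function.Injective key ∧
      key v = key u + 1 := by
    have hw_lt : ∀ x : Fin d, (if x = u then d else if x = v then d + 1 else x.val) < d + 2 := by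
      intro x; have := x.isLt; split_ifs <;> omega
    have hK1 : ∀ x y : Fin d, lam y < lam x →
        lam y * (d + 2) + (if y = u then d else if y = v then d + 1 else y.val)
          < lam x * (d + 2) + (if x = u then d else if x = v then d + 1 else x.val) := by
      intro x y h
      have h1 : (lam y + 1) * (d + 2) ≤ lam x * (d + 2) := Nat.mul_le_mul_right _ h
      have h2 := hw_lt y
      rw [add_mul, one_mul] at h1
      omega
    refine ⟨fun x => lam x * (d + 2) + (if x = u then d else if x = v then d + 1 else x.val),
      hK1, ?_, ?_⟩
    · intro x y hxy
      have hxy' : lam x * (d + 2) + (if x = u then d else if x = v then d + 1 else x.val)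
          = lam y * (d + 2) + (if y = u then d else if y = v then d + 1 else y.val) := hxy
      have hlam : lam x = lam y := by
        rcases lt_trichotomy (lam x) (lam y) with h | h | h
        · exact absurd hxy' (Nat.ne_of_lt (hK1 y x h))
        · exact h
        · exact absurd hxy'.symm (Nat.ne_of_lt (hK1 x y h))
      rw [hlam] at hxy'
      have hw : (if x = u then d else if x = v then d + 1 else x.val)
          = (if y = u then d else if y = v then d + 1 else y.val) := by omega
      have hxlt := x.isLt
      have hylt := y.isLt
      rcases eq_or_ne x u with h1 | h1
      · rcases eq_or_ne y u with h2 | h2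
        · rw [h1, h2]
        · rw [if_pos h1, if_neg h2] at hw
          exact absurd hw (by split_ifs <;> omega)
      · rcases eq_or_ne x v with h3 | h3
        · rcases eq_or_ne y v with h4 | h4
          · rw [h3, h4]
          · rw [if_neg h1, if_pos h3, if_neg h4] at hw
            exact absurd hw (by split_ifs <;> omega)
        · rw [if_neg h1, if_neg h3] at hw
          rcases eq_or_ne y u with h2 | h2
          · rw [if_pos h2] at hw
            exact absurd hw (by omega)
          · rcases eq_or_ne y v with h4 | h4
            · rw [if_neg h2, if_pos h4] at hw
              exact absurd hw (by omega)
            · rw [if_neg h2, if_neg h4] at hw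
              exact Fin.ext hw
    · show lam v * (d + 2) + (if v = u then d else if v = v then d + 1 else v.val)
        = lam u * (d + 2) + (if u = u then d else if u = v then d + 1 else u.val) + 1
      rw [if_neg (Ne.symm hune), if_pos rfl, if_pos rfl, hlamu, hlamv]
      omega
  have K2 : ∀ x y, key y < key x → lam y ≤ lam x := by
    intro x y h
    by_contra hc
    push_neg at hc
    exact absurd (K1 y x hc) (by omega)
  -- the rank function
  obtain ⟨r, R1, R2, R3, R4⟩ : ∃ r : Fin d → ℕ,
      (∀ x, r x < d) ∧
      (∀ m, m < d → ∃ x, r x = m) ∧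
      (∀ x j, j ≤ k + 1 → (x ∈ S j ↔ r x < (S j).card)) ∧
      r v = r u + 1 := by
    refine ⟨fun x => (Finset.univ.filter (fun y => key y < key x)).card, ?_, ?_, ?_, ?_⟩
    case refine_1 =>
      intro x
      show (Finset.univ.filter (fun y => key y < key x)).card < d
      have hss : Finset.univ.filter (fun y => key y < key x) ⊆ Finset.univ.erase x := by
        intro y hy
        simp only [Finset.mem_filter] at hy
        refine Finset.mem_erase.mpr ⟨?_, Finset.mem_univ y⟩
        rintro rfl; exact lt_irrefl _ hy.2
      have := Finset.card_le_card hss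
      rw [Finset.card_erase_of_mem (Finset.mem_univ x), Finset.card_univ, Fintype.card_fin] at this
      omega
    case refine_3 =>
      intro x j hj
      show x ∈ S j ↔ (Finset.univ.filter (fun y => key y < key x)).card < (S j).card
      constructor
      · intro hx
        have hss : Finset.univ.filter (fun y => key y < key x) ⊆ (S j).erase x := by
          intro y hy
          simp only [Finset.mem_filter] at hy
          refine Finset.mem_erase.mpr ⟨?_, ?_⟩
          · rintro rfl; exact lt_irrefl _ hy.2
          · have h1 : lam y ≤ lam x := K2 x y hy.2
            have h2 : lam x < j := (hlamlt x j hj).mpr hx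
            exact (hlamlt y j hj).mp (by omega)
        have h3 := Finset.card_le_card hss
        rw [Finset.card_erase_of_mem hx] at h3
        have h4 : 0 < (S j).card := Finset.card_pos.mpr ⟨x, hx⟩
        omega
      · intro hcard
        by_contra hx
        have hss : S j ⊆ Finset.univ.filter (fun y => key y < key x) := by
          intro y hy
          simp only [Finset.mem_filter]
          refine ⟨Finset.mem_univ y, ?_⟩
          have h1 : lam y < j := (hlamlt y j hj).mpr hy
          have h2 : ¬ lam x < j := fun h => hx ((hlamlt x j hj).mp h)
          exact K1 x y (by omega)
        have := Finset.card_le_card hss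
        omega
    case refine_4 =>
      show (Finset.univ.filter (fun y => key y < key v)).card
        = (Finset.univ.filter (fun y => key y < key u)).card + 1
      have hfeq : Finset.univ.filter (fun y => key y < key v)
          = insert u (Finset.univ.filter (fun y => key y < key u)) := by
        ext y
        simp only [Finset.mem_filter, Finset.mem_insert, Finset.mem_univ, true_and]
        constructor
        · intro h
          rw [K4] at h
          rcases Nat.lt_or_ge (key y) (key u) with h' | h'
          · exact Or.inr h'
          · exact Or.inl (K3 (by omega))
        · rintro (rfl | h)
          · rw [K4]; omega
          · rw [K4]; omega
      rw [hfeq, Finset.card_insert_of_notMem (by simp)]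
    case refine_2 =>
      -- surjectivity from injectivity
      have hlt : ∀ x : Fin d, (Finset.univ.filter (fun y => key y < key x)).card < d := by
        intro x
        have hss : Finset.univ.filter (fun y => key y < key x) ⊆ Finset.univ.erase x := by
          intro y hy
          simp only [Finset.mem_filter] at hy
          refine Finset.mem_erase.mpr ⟨?_, Finset.mem_univ y⟩
          rintro rfl; exact lt_irrefl _ hy.2
        have := Finset.card_le_card hss
        rw [Finset.card_erase_of_mem (Finset.mem_univ x), Finset.card_univ,
          Fintype.card_fin] at this
        omega
      have hmonor : ∀ x y : Fin d, key x < key y →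
          (Finset.univ.filter (fun z => key z < key x)).card
            < (Finset.univ.filter (fun z => key z < key y)).card := by
        intro x y h
        apply Finset.card_lt_card
        constructor
        · intro z hz
          simp only [Finset.mem_filter] at hz ⊢
          exact ⟨hz.1, lt_trans hz.2 h⟩
        · intro hss
          have hx : x ∈ Finset.univ.filter (fun z => key z < key y) := by
            simp only [Finset.mem_filter]; exact ⟨Finset.mem_univ x, h⟩
          have := hss hx
          simp only [Finset.mem_filter] at this
          exact lt_irrefl _ this.2
      have hinj : Function.Injective
          (fun x : Fin d => (⟨(Finset.univ.filter (fun y => key y < key x)).card, hlt x⟩ : Fin d)) := by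
        intro x y hxy
        simp only [Fin.mk.injEq] at hxy
        rcases lt_trichotomy (key x) (key y) with h | h | h
        · exact absurd hxy (Nat.ne_of_lt (hmonor x y h))
        · exact K3 h
        · exact absurd hxy.symm (Nat.ne_of_lt (hmonor y x h))
      have hsurj := Finite.surjective_of_injective hinj
      intro m hm
      obtain ⟨x, hx⟩ := hsurj ⟨m, hm⟩
      exact ⟨x, show (Finset.univ.filter (fun y => key y < key x)).card = m from congrArg Fin.val hx⟩
  -- set up the final construction
  obtain ⟨p, hpu⟩ : ∃ p, r u = p := ⟨_, rfl⟩
  rw [hpu] at R4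
  have hp : p + 2 ≤ d := by have := R1 v; omega
  have hcard_ne : ∀ j, j ≤ k + 1 → (S j).card ≠ p + 1 := by
    intro j hj hcard
    have h1 := R3 u j hj
    have h2 := R3 v j hj
    have h3 : u ∈ S j ↔ v ∈ S j := by
      rw [← hlamlt u j hj, ← hlamlt v j hj, hlamu, hlamv]
    rw [h1, h2, R4, hcard] at h3
    omega
  refine ⟨fun i => Finset.univ.filter fun x => (if r x ≤ p then r x else r x - 1) < i,
    ?_, ?_, ?_, ?_, ?_⟩
  · ext x; simp
  · ext x
    simp only [Finset.mem_filter, Finset.mem_univ, true_and, iff_true]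
    have := R1 x
    split_ifs <;> omega
  · intro i hi
    have hx : ∃ x, (if r x ≤ p then r x else r x - 1) = i := by
      rcases le_or_gt i p with h | h
      · obtain ⟨x, hx⟩ := R2 i (by omega)
        exact ⟨x, by rw [hx, if_pos h]⟩
      · obtain ⟨x, hx⟩ := R2 (i + 1) (by omega)
        refine ⟨x, ?_⟩
        rw [hx, if_neg (by omega)]
        omega
    obtain ⟨x, hx⟩ := hx
    have hss : (Finset.univ.filter fun x => (if r x ≤ p then r x else r x - 1) < i)
        ⊆ Finset.univ.filter fun x => (if r x ≤ p then r x else r x - 1) < i + 1 := by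
      intro y hy
      simp only [Finset.mem_filter, Finset.mem_univ, true_and] at hy ⊢
      omega
    refine (Finset.ssubset_iff_of_subset hss).mpr ⟨x, ?_, ?_⟩
    · simp only [Finset.mem_filter, Finset.mem_univ, true_and]; omega
    · simp only [Finset.mem_filter, Finset.mem_univ, true_and]; omega
  · refine ⟨p, by omega, u, v, huv, ?_, ?_⟩
    · simp only [Finset.mem_sdiff, Finset.mem_filter, Finset.mem_univ, true_and]
      rw [hpu, if_pos le_rfl]
      omega
    · simp only [Finset.mem_sdiff, Finset.mem_filter, Finset.mem_univ, true_and]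
      rw [R4, if_neg (by omega)]
      omega
  · intro j hj1 hjk
    have hjk1 : j ≤ k + 1 := by omega
    have hcard_lt : (S j).card < d := by
      have h1 := Finset.card_lt_card (hchain j (by omega))
      have h2 : (S (j + 1)).card ≤ d := by
        have := Finset.card_le_card (Finset.subset_univ (S (j + 1)))
        rwa [Finset.card_univ, Fintype.card_fin] at this
      omega
    have hcard_pos : 0 < (S j).card := by
      have h1 : S 1 ⊆ S j := hmono 1 j hj1 hjk1
      have h2 : S 0 ⊂ S 1 := hchain 0 (by omega)
      rw [hS0] at h2
      obtain ⟨x, hx⟩ := Finset.exists_of_ssubset h2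
      exact Finset.card_pos.mpr ⟨x, h1 hx.1⟩
    have hne := hcard_ne j hjk1
    refine ⟨if (S j).card ≤ p then (S j).card else (S j).card - 1,
      by split_ifs <;> omega, by split_ifs <;> omega, ?_⟩
    ext x
    rw [R3 x j hjk1]
    simp only [Finset.mem_filter, Finset.mem_univ, true_and]
    split_ifs <;> omega
end

section
/- Assume d ≥ 3 and let e = {u, v} be an edge of G. (i) A chain of proper nonempty subsets of [d] is a subchain of some maximal face-chain whose unique 2-element difference set is e if and only if every set in the chain contains both of u, v or neither of them. (ii) For every k ≥ 1, the number of chains S_1 ⊊ S_2 ⊊ ⋯ ⊊ S_k of proper nonempty subsets of [d] in which every S_i contains both or neither of u and v equals the number of chains of length k of proper nonempty subsets of a (d−1)-element set. (Thus the e-sphere is isomorphic to the order complex of the truncated Boolean algebra on d−1 atoms.) -/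
open Finset

private lemma chainMono {β : Type*} [DecidableEq β] (S : ℕ → Finset β) (k : ℕ)
    (hss : ∀ i, i ≤ k → S i ⊂ S (i + 1)) :
    ∀ a b, a ≤ b → b ≤ k + 1 → S a ⊆ S b := by
  intro a b hab hb
  induction b, hab using Nat.le_induction with
  | base => exact subset_rfl
  | succ b hab ih =>
    exact (ih (by omega)).trans (hss b (by omega)).subset

private lemma exists_maximal_chain {d k : ℕ} (hd : 3 ≤ d) (u v : Fin d) (huv : u ≠ v)
    (hk : 1 ≤ k) (S : ℕ → Finset (Fin d)) (h0 : S 0 = ∅) (htop : S (k + 1) = Finset.univ)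
    (hss : ∀ i, i ≤ k → S i ⊂ S (i + 1))
    (hbn : ∀ j, 1 ≤ j → j ≤ k → ((u ∈ S j ∧ v ∈ S j) ∨ (u ∉ S j ∧ v ∉ S j))) :
    ∃ T : ℕ → Finset (Fin d), T 0 = ∅ ∧ T (d - 1) = Finset.univ ∧
      (∀ i, i ≤ d - 2 → T i ⊂ T (i + 1)) ∧
      (∃ i ≤ d - 2, T (i + 1) \ T i = {u, v}) ∧
      (∀ j, 1 ≤ j → j ≤ k → ∃ i, 1 ≤ i ∧ i ≤ d - 2 ∧ S j = T i) := by
  have hdpos : 0 < d := by omega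
  have hmono := chainMono S k hss
  have hex : ∀ x : Fin d, ∃ j, x ∈ S j := fun x => ⟨k + 1, by rw [htop]; exact mem_univ x⟩
  set L : Fin d → ℕ := fun x => Nat.find (hex x) with hLdef
  have hL_mem : ∀ x, x ∈ S (L x) := fun x => Nat.find_spec (hex x)
  have hL_le : ∀ x, L x ≤ k + 1 := fun x => Nat.find_le (by rw [htop]; exact mem_univ x)
  have hL_min : ∀ x j, x ∈ S j → L x ≤ j := fun x j h => Nat.find_le h
  have hmemL : ∀ (x : Fin d) (j : ℕ), j ≤ k + 1 → (x ∈ S j ↔ L x ≤ j) := by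
    intro x j hj
    constructor
    · exact hL_min x j
    · intro h; exact hmono (L x) j h hj (hL_mem x)
  have hL1 : ∀ x, 1 ≤ L x := by
    intro x
    rcases Nat.eq_zero_or_pos (L x) with h | h
    · exfalso; have := hL_mem x; rw [h, h0] at this; simp at this
    · exact h
  have hbn' : ∀ j, j ≤ k + 1 → (u ∈ S j ↔ v ∈ S j) := by
    intro j hj
    rcases Nat.eq_zero_or_pos j with rfl | hj1
    · simp [h0]
    rcases Nat.lt_or_ge j (k + 1) with hjk | hjk
    · rcases hbn j hj1 (by omega) with ⟨h1, h2⟩ | ⟨h1, h2⟩ <;> simp [h1, h2]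
    · have : j = k + 1 := by omega
      simp [this, htop]
  have hLuv : L u = L v := by
    apply le_antisymm
    · exact hL_min u (L v) ((hbn' (L v) (hL_le v)).mpr (hL_mem v))
    · exact hL_min v (L u) ((hbn' (L u) (hL_le u)).mp (hL_mem u))
  classical
  set g : Fin d → Fin d := fun x => if x = v then u else x with hgdef
  have hgv : g v = u := by simp [hgdef]
  have hgu : g u = u := by simp [hgdef, huv]
  have hgL : ∀ x, L (g x) = L x := by
    intro x
    by_cases hx : x = v
    · simp [hgdef, hx, hLuv]
    · simp [hgdef, hx]
  set key : Fin d → ℕ := fun x => (g x).val + d * L x with hkeydef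
  have hkey_lt : ∀ (x : Fin d) (j : ℕ), key x < d * (j + 1) ↔ L x ≤ j := by
    intro x j
    constructor
    · intro h
      by_contra h'
      have h1 : j + 1 ≤ L x := by omega
      have h2 : d * (j + 1) ≤ d * L x := Nat.mul_le_mul_left d h1
      have : d * L x ≤ key x := Nat.le_add_left _ _
      omega
    · intro h
      have h2 : d * L x ≤ d * j := Nat.mul_le_mul_left d h
      have h3 : (g x).val < d := (g x).isLt
      have h4 : d * (j + 1) = d * j + d := by ring
      have h5 : key x = (g x).val + d * L x := rfl
      omega
  have hkey_eq : ∀ x y : Fin d, key x = key y → (g x = g y ∧ L x = L y) := by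
    intro x y h
    have hx : (g x).val < d := (g x).isLt
    have hy : (g y).val < d := (g y).isLt
    have hdx : ((g x).val + d * L x) / d = L x := by
      rw [Nat.add_mul_div_left _ _ hdpos, Nat.div_eq_of_lt hx, Nat.zero_add]
    have hdy : ((g y).val + d * L y) / d = L y := by
      rw [Nat.add_mul_div_left _ _ hdpos, Nat.div_eq_of_lt hy, Nat.zero_add]
    have hmx : ((g x).val + d * L x) % d = (g x).val := by
      rw [Nat.add_mul_mod_self_left, Nat.mod_eq_of_lt hx]
    have hmy : ((g y).val + d * L y) % d = (g y).val := by
      rw [Nat.add_mul_mod_self_left, Nat.mod_eq_of_lt hy]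
    have hL : L x = L y := by rw [← hdx, ← hdy]; exact congrArg (· / d) h
    have hval : (g x).val = (g y).val := by rw [← hmx, ← hmy]; exact congrArg (· % d) h
    exact ⟨Fin.ext hval, hL⟩
  have hkey_uv : key u = key v := by simp [hkeydef, hgu, hgv, hLuv]
  have hkey_cases : ∀ x y : Fin d, key x = key y → x = y ∨ (x = u ∧ y = v) ∨ (x = v ∧ y = u) := by
    intro x y h
    obtain ⟨hg, -⟩ := hkey_eq x y h
    by_cases hxv : x = v <;> by_cases hyv : y = v
    · left; rw [hxv, hyv]
    · simp [hgdef, hxv, hyv] at hg; right; right; exact ⟨hxv, hg.symm⟩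
    · simp [hgdef, hxv, hyv] at hg; right; left; exact ⟨hg, hyv⟩
    · simp [hgdef, hxv, hyv] at hg; left; exact hg
  set K : Finset ℕ := Finset.image key Finset.univ with hKdef
  have hkey_mem : ∀ x, key x ∈ K := fun x => mem_image_of_mem key (mem_univ x)
  have hKcard : K.card = d - 1 := by
    have hKe : K = Finset.image key (Finset.univ.erase v) := by
      apply le_antisymm
      · intro κ hκ
        rw [hKdef, mem_image] at hκ
        obtain ⟨x, -, rfl⟩ := hκ
        by_cases hx : x = v
        · rw [hx, ← hkey_uv]
          exact mem_image_of_mem key (mem_erase.mpr ⟨huv, mem_univ u⟩)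
        · exact mem_image_of_mem key (mem_erase.mpr ⟨hx, mem_univ x⟩)
      · intro κ hκ
        rw [mem_image] at hκ
        obtain ⟨x, -, rfl⟩ := hκ
        exact hkey_mem x
    rw [hKe, Finset.card_image_of_injOn, card_erase_of_mem (mem_univ v), Finset.card_univ,
      Fintype.card_fin]
    intro x hx y hy h
    rcases hkey_cases x y h with h | ⟨h1, h2⟩ | ⟨h1, h2⟩
    · exact h
    · exact absurd h2 (mem_erase.mp hy).1
    · exact absurd h1 (mem_erase.mp hx).1
  set r : Fin d → ℕ := fun x => (K.filter (fun κ => κ < key x)).card with hrdef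
  have hr_lt : ∀ x y : Fin d, key x < key y → r x < r y := by
    intro x y h
    apply Finset.card_lt_card
    constructor
    · intro κ hκ
      rw [mem_filter] at hκ ⊢
      exact ⟨hκ.1, lt_trans hκ.2 h⟩
    · intro hsub
      have : key x ∈ K.filter (fun κ => κ < key x) :=
        hsub (mem_filter.mpr ⟨hkey_mem x, h⟩)
      rw [mem_filter] at this
      omega
  have hr_eq : ∀ x y : Fin d, r x = r y → key x = key y := by
    intro x y h
    rcases Nat.lt_trichotomy (key x) (key y) with h' | h' | h'
    · exact absurd h (Nat.ne_of_lt (hr_lt x y h'))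
    · exact h'
    · exact absurd h.symm (Nat.ne_of_lt (hr_lt y x h'))
  have hr_le : ∀ x, r x ≤ d - 2 := by
    intro x
    have hsub : K.filter (fun κ => κ < key x) ⊆ K.erase (key x) := by
      intro κ hκ
      rw [mem_filter] at hκ
      exact mem_erase.mpr ⟨Nat.ne_of_lt hκ.2, hκ.1⟩
    have := Finset.card_le_card hsub
    rw [card_erase_of_mem (hkey_mem x), hKcard] at this
    have hrx : r x = (K.filter (fun κ => κ < key x)).card := rfl
    omega
  have hr_surj : ∀ i, i ≤ d - 2 → ∃ x, r x = i := by
    intro i hi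
    set ρ : ℕ → ℕ := fun κ => (K.filter (fun κ' => κ' < κ)).card with hρdef
    have hρ_lt : ∀ κ κ', κ ∈ K → κ < κ' → ρ κ < ρ κ' := by
      intro κ κ' hκ h
      apply Finset.card_lt_card
      constructor
      · intro a ha; rw [mem_filter] at ha ⊢; exact ⟨ha.1, lt_trans ha.2 h⟩
      · intro hsub
        have : κ ∈ K.filter (fun a => a < κ) := hsub (mem_filter.mpr ⟨hκ, h⟩)
        rw [mem_filter] at this; omega
    have hinj : Set.InjOn ρ K := by
      intro a ha b hb h
      rcases Nat.lt_trichotomy a b with h' | h' | h'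
      · exact absurd h (Nat.ne_of_lt (hρ_lt a b ha h'))
      · exact h'
      · exact absurd h.symm (Nat.ne_of_lt (hρ_lt b a hb h'))
    have hρ_le : ∀ κ ∈ K, ρ κ < d - 1 := by
      intro κ hκ
      have hsub : K.filter (fun κ' => κ' < κ) ⊆ K.erase κ := by
        intro a ha; rw [mem_filter] at ha
        exact mem_erase.mpr ⟨Nat.ne_of_lt ha.2, ha.1⟩
      have := Finset.card_le_card hsub
      rw [card_erase_of_mem hκ, hKcard] at this
      have hq : ρ κ = (K.filter (fun κ' => κ' < κ)).card := rfl
      omega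
    have himg : K.image ρ = Finset.range (d - 1) := by
      apply Finset.eq_of_subset_of_card_le
      · intro a ha
        rw [mem_image] at ha
        obtain ⟨κ, hκ, rfl⟩ := ha
        exact mem_range.mpr (hρ_le κ hκ)
      · rw [Finset.card_range, Finset.card_image_of_injOn hinj, hKcard]
    have : i ∈ K.image ρ := by rw [himg]; exact mem_range.mpr (by omega)
    rw [mem_image] at this
    obtain ⟨κ, hκ, hρκ⟩ := this
    rw [hKdef, mem_image] at hκ
    obtain ⟨x, -, rfl⟩ := hκ
    exact ⟨x, hρκ⟩
  set T : ℕ → Finset (Fin d) := fun i => Finset.univ.filter (fun x => r x < i) with hTdef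
  refine ⟨T, ?_, ?_, ?_, ?_, ?_⟩
  · simp [hTdef]
  · rw [hTdef]
    apply Finset.eq_univ_of_forall
    intro x
    rw [mem_filter]
    exact ⟨mem_univ x, by have := hr_le x; omega⟩
  · intro i hi
    constructor
    · intro x hx
      rw [hTdef, mem_filter] at hx ⊢
      exact ⟨hx.1, by omega⟩
    · intro hsub
      obtain ⟨x, hx⟩ := hr_surj i hi
      have : x ∈ T i := hsub (by rw [hTdef, mem_filter]; exact ⟨mem_univ x, by omega⟩)
      rw [hTdef, mem_filter] at this
      omega
  · refine ⟨r u, hr_le u, ?_⟩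
    ext x
    rw [mem_sdiff, hTdef, mem_filter, mem_filter]
    simp only [mem_univ, true_and, not_lt, mem_insert, mem_singleton]
    constructor
    · rintro ⟨h1, h2⟩
      have : r x = r u := by omega
      rcases hkey_cases x u (hr_eq x u this) with h | ⟨h', -⟩ | ⟨h', -⟩
      · left; exact h
      · left; exact h'
      · right; exact h'
    · rintro (h | h)
      · rw [h]; exact ⟨Nat.lt_succ_self _, le_refl _⟩
      · rw [h]
        have hrv : r v = r u := by simp only [hrdef, ← hkey_uv]
        rw [hrv]
        exact ⟨Nat.lt_succ_self _, le_refl _⟩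
  · intro j hj1 hjk
    set m : ℕ := (K.filter (fun κ => κ < d * (j + 1))).card with hmdef
    have hTm : S j = T m := by
      ext x
      rw [hTdef, mem_filter]
      simp only [mem_univ, true_and]
      constructor
      · intro hx
        have hLx : L x ≤ j := hL_min x j hx
        have hkx : key x < d * (j + 1) := (hkey_lt x j).mpr hLx
        apply Finset.card_lt_card
        constructor
        · intro κ hκ
          rw [mem_filter] at hκ ⊢
          exact ⟨hκ.1, lt_trans hκ.2 hkx⟩
        · intro hsub
          have : key x ∈ K.filter (fun κ => κ < key x) :=
            hsub (mem_filter.mpr ⟨hkey_mem x, hkx⟩)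
          rw [mem_filter] at this; omega
      · intro hx
        by_contra hxS
        have hLx : ¬ L x ≤ j := fun h => hxS ((hmemL x j (by omega)).mpr h)
        have hkx : ¬ key x < d * (j + 1) := fun h => hLx ((hkey_lt x j).mp h)
        have hsub : K.filter (fun κ => κ < d * (j + 1)) ⊆ K.filter (fun κ => κ < key x) := by
          intro κ hκ
          rw [mem_filter] at hκ ⊢
          exact ⟨hκ.1, by omega⟩
        have := Finset.card_le_card hsub
        have hrx : r x = (K.filter (fun κ => κ < key x)).card := rfl
        have hm' : m = (K.filter (fun κ => κ < d * (j + 1))).card := rfl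
        omega
    refine ⟨m, ?_, ?_, hTm⟩
    · -- m ≥ 1
      obtain ⟨x, hx1, -⟩ := Finset.exists_of_ssubset (hss 0 (by omega))
      have hLx : L x ≤ j := le_trans (hL_min x 1 hx1) hj1
      have : key x ∈ K.filter (fun κ => κ < d * (j + 1)) :=
        mem_filter.mpr ⟨hkey_mem x, (hkey_lt x j).mpr hLx⟩
      have := Finset.card_pos.mpr ⟨key x, this⟩
      have hm' : m = (K.filter (fun κ => κ < d * (j + 1))).card := rfl
      omega
    · -- m ≤ d - 2
      obtain ⟨y, hy1, hy2⟩ := Finset.exists_of_ssubset (hss j hjk)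
      have hLy : ¬ L y ≤ j := fun h => hy2 ((hmemL y j (by omega)).mpr h)
      have hky : ¬ key y < d * (j + 1) := fun h => hLy ((hkey_lt y j).mp h)
      have hsub : K.filter (fun κ => κ < d * (j + 1)) ⊆ K.erase (key y) := by
        intro κ hκ
        rw [mem_filter] at hκ
        refine mem_erase.mpr ⟨?_, hκ.1⟩
        intro h; rw [h] at hκ; exact hky hκ.2
      have := Finset.card_le_card hsub
      rw [card_erase_of_mem (hkey_mem y), hKcard] at this
      have hm' : m = (K.filter (fun κ => κ < d * (j + 1))).card := rfl
      omega
private lemma chainMonoX {β : Type*} [DecidableEq β] (S : ℕ → Finset β) (k : ℕ)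
    (hss : ∀ i, i ≤ k → S i ⊂ S (i + 1)) :
    ∀ a b, a ≤ b → b ≤ k + 1 → S a ⊆ S b := by
  intro a b hab hb
  induction b, hab using Nat.le_induction with
  | base => exact subset_rfl
  | succ b hab ih => exact (ih (by omega)).trans (hss b (by omega)).subset

private lemma card_chains_eq {d k : ℕ} (hd : 3 ≤ d) (hk : 1 ≤ k) (u v : Fin d) (huv : u ≠ v) :
    Nat.card {S : ℕ → Finset (Fin d) // S 0 = ∅ ∧
        (∀ i, k + 1 ≤ i → S i = Finset.univ) ∧ (∀ i, i ≤ k → S i ⊂ S (i + 1)) ∧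
        ∀ j, 1 ≤ j → j ≤ k → ((u ∈ S j ∧ v ∈ S j) ∨ (u ∉ S j ∧ v ∉ S j))} =
      Nat.card {S : ℕ → Finset (Fin (d - 1)) // S 0 = ∅ ∧
        (∀ i, k + 1 ≤ i → S i = Finset.univ) ∧ (∀ i, i ≤ k → S i ⊂ S (i + 1))} := by
  classical
  have hcard : Fintype.card {x : Fin d // x ≠ v} = d - 1 := by
    simp [Fintype.card_subtype_compl]
  let φ : {x : Fin d // x ≠ v} ≃ Fin (d - 1) := Fintype.equivFinOfCardEq hcard
  let g : Fin d → Fin d := fun x => if x = v then u else x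
  have hg : ∀ x, g x ≠ v := by
    intro x
    by_cases hx : x = v
    · simp [g, hx, huv]
    · simp [g, hx]
  let ι : Fin d → Fin (d - 1) := fun x => φ ⟨g x, hg x⟩
  have hιu : ι u = ι v := by
    have : g u = g v := by simp [g, huv]
    simp only [ι, this]
  have hιinv : ∀ y : Fin (d - 1), ι ((φ.symm y : {x : Fin d // x ≠ v}) : Fin d) = y := by
    intro y
    have hne : ((φ.symm y : {x : Fin d // x ≠ v}) : Fin d) ≠ v := (φ.symm y).2
    have h1 : (⟨g ((φ.symm y : {x : Fin d // x ≠ v}) : Fin d), hg _⟩ : {x : Fin d // x ≠ v})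
        = φ.symm y := by
      apply Subtype.ext
      show g _ = _
      simp [g, hne]
    simp only [ι]
    rw [h1, Equiv.apply_symm_apply]
  let F : (ℕ → Finset (Fin d)) → (ℕ → Finset (Fin (d - 1))) :=
    fun S i => Finset.univ.filter (fun y => ((φ.symm y : {x : Fin d // x ≠ v}) : Fin d) ∈ S i)
  let Gm : (ℕ → Finset (Fin (d - 1))) → (ℕ → Finset (Fin d)) :=
    fun S' i => Finset.univ.filter (fun x => ι x ∈ S' i)
  apply Nat.card_congr
  refine ⟨fun p => ⟨F p.1, ?_, ?_, ?_⟩, fun p => ⟨Gm p.1, ?_, ?_, ?_, ?_⟩, ?_, ?_⟩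
  · -- F: 0 ↦ ∅
    obtain ⟨S, h0, -, -, -⟩ := p
    simp [F, h0]
  · -- F: univ
    obtain ⟨S, -, htop, -, -⟩ := p
    intro i hi
    apply Finset.eq_univ_of_forall
    intro y
    simp [F, htop i hi]
  · -- F: strict chain
    obtain ⟨S, h0, htop, hss, hbn⟩ := p
    have hall : ∀ i, (u ∈ S i ↔ v ∈ S i) := by
      intro i
      rcases Nat.eq_zero_or_pos i with rfl | hi1
      · simp [h0]
      rcases Nat.lt_or_ge i (k + 1) with hik | hik
      · rcases hbn i hi1 (by omega) with ⟨h1, h2⟩ | ⟨h1, h2⟩ <;> simp [h1, h2]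
      · simp [htop i hik]
    intro i hi
    constructor
    · intro y hy
      simp only [F, mem_filter, mem_univ, true_and] at hy ⊢
      exact (hss i hi).subset hy
    · intro hsub
      obtain ⟨x, hx1, hx2⟩ := Finset.exists_of_ssubset (hss i hi)
      by_cases hxv : x = v
      · subst hxv
        have hu1 : u ∈ S (i + 1) := (hall (i + 1)).mpr hx1
        have hu2 : u ∉ S i := fun h => hx2 ((hall i).mp h)
        have : φ ⟨u, huv⟩ ∈ F S i :=
          hsub (by simp only [F, mem_filter, mem_univ, true_and, Equiv.symm_apply_apply]
                   exact hu1)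
        simp only [F, mem_filter, mem_univ, true_and, Equiv.symm_apply_apply] at this
        exact hu2 this
      · have : φ ⟨x, hxv⟩ ∈ F S i :=
          hsub (by simp only [F, mem_filter, mem_univ, true_and, Equiv.symm_apply_apply]
                   exact hx1)
        simp only [F, mem_filter, mem_univ, true_and, Equiv.symm_apply_apply] at this
        exact hx2 this
  · -- Gm: 0 ↦ ∅
    obtain ⟨S', h0, -, -⟩ := p
    simp [Gm, h0]
  · -- Gm: univ
    obtain ⟨S', -, htop, -⟩ := p
    intro i hi
    apply Finset.eq_univ_of_forall
    intro x
    simp [Gm, htop i hi]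
  · -- Gm: strict chain
    obtain ⟨S', h0, htop, hss⟩ := p
    intro i hi
    constructor
    · intro x hx
      simp only [Gm, mem_filter, mem_univ, true_and] at hx ⊢
      exact (hss i hi).subset hx
    · intro hsub
      obtain ⟨y, hy1, hy2⟩ := Finset.exists_of_ssubset (hss i hi)
      have : ((φ.symm y : {x : Fin d // x ≠ v}) : Fin d) ∈ Gm S' i :=
        hsub (by simp only [Gm, mem_filter, mem_univ, true_and, hιinv]; exact hy1)
      simp only [Gm, mem_filter, mem_univ, true_and, hιinv] at this
      exact hy2 this
  · -- Gm: both/neither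
    obtain ⟨S', -, -, -⟩ := p
    intro j hj1 hj2
    by_cases h : ι u ∈ S' j
    · left
      constructor
      · simp only [Gm, mem_filter, mem_univ, true_and]; exact h
      · simp only [Gm, mem_filter, mem_univ, true_and]; rw [← hιu]; exact h
    · right
      constructor
      · simp only [Gm, mem_filter, mem_univ, true_and]; exact h
      · simp only [Gm, mem_filter, mem_univ, true_and]; rw [← hιu]; exact h
  · -- left inverse
    rintro ⟨S, h0, htop, hss, hbn⟩
    apply Subtype.ext
    funext i
    have hall : ∀ i, (u ∈ S i ↔ v ∈ S i) := by
      intro i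
      rcases Nat.eq_zero_or_pos i with rfl | hi1
      · simp [h0]
      rcases Nat.lt_or_ge i (k + 1) with hik | hik
      · rcases hbn i hi1 (by omega) with ⟨h1, h2⟩ | ⟨h1, h2⟩ <;> simp [h1, h2]
      · simp [htop i hik]
    show Gm (F S) i = S i
    ext x
    simp only [Gm, F, mem_filter, mem_univ, true_and]
    have hsymm : ((φ.symm (ι x) : {x : Fin d // x ≠ v}) : Fin d) = g x := by
      simp only [ι]
      rw [Equiv.symm_apply_apply]
    rw [hsymm]
    by_cases hxv : x = v
    · subst hxv
      have : g x = u := by simp [g]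
      rw [this]
      exact hall i
    · have : g x = x := by simp [g, hxv]
      rw [this]
  · -- right inverse
    rintro ⟨S', h0, htop, hss⟩
    apply Subtype.ext
    funext i
    show F (Gm S') i = S' i
    ext y
    simp only [F, Gm, mem_filter, mem_univ, true_and, hιinv]


/-- Let `d ≥ 3` and let `{u, v}` be an edge of `G`.
(i) A chain `∅ ⊊ S 1 ⊊ ⋯ ⊊ S k ⊊ [d]` of proper nonempty subsets of `[d]` is a
subchain of some maximal chain whose unique `2`-element difference set is `{u, v}`
iff every `S j` contains both of `u, v` or neither of them.
(ii) For every `k ≥ 1`, the number of such chains of length `k` (encoded by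
`S : ℕ → Finset (Fin d)` with `S 0 = ∅` and `S i = univ` for `i ≥ k + 1`) in which
every member contains both or neither of `u, v` equals the number of chains of length
`k` of proper nonempty subsets of a `(d − 1)`-element set.  (Thus the `e`-sphere is
isomorphic to the order complex of the truncated Boolean algebra on `d − 1` atoms.) -/
theorem edge_sphere_structure {d : ℕ} (hd : 3 ≤ d) (G : SimpleGraph (Fin d))
    (u v : Fin d) (he : G.Adj u v) :
    (∀ k : ℕ, 1 ≤ k → ∀ S : ℕ → Finset (Fin d), S 0 = ∅ → S (k + 1) = Finset.univ →
      (∀ i, i ≤ k → S i ⊂ S (i + 1)) →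
      ((∃ T : ℕ → Finset (Fin d), T 0 = ∅ ∧ T (d - 1) = Finset.univ ∧
          (∀ i, i ≤ d - 2 → T i ⊂ T (i + 1)) ∧
          (∃ i ≤ d - 2, T (i + 1) \ T i = {u, v}) ∧
          (∀ j, 1 ≤ j → j ≤ k → ∃ i, 1 ≤ i ∧ i ≤ d - 2 ∧ S j = T i)) ↔
        (∀ j, 1 ≤ j → j ≤ k → ((u ∈ S j ∧ v ∈ S j) ∨ (u ∉ S j ∧ v ∉ S j))))) ∧
    (∀ k : ℕ, 1 ≤ k →
      Nat.card {S : ℕ → Finset (Fin d) // S 0 = ∅ ∧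
        (∀ i, k + 1 ≤ i → S i = Finset.univ) ∧ (∀ i, i ≤ k → S i ⊂ S (i + 1)) ∧
        ∀ j, 1 ≤ j → j ≤ k → ((u ∈ S j ∧ v ∈ S j) ∨ (u ∉ S j ∧ v ∉ S j))} =
      Nat.card {S : ℕ → Finset (Fin (d - 1)) // S 0 = ∅ ∧
        (∀ i, k + 1 ≤ i → S i = Finset.univ) ∧ (∀ i, i ≤ k → S i ⊂ S (i + 1))}) := by
  have huv : u ≠ v := he.ne
  constructor
  · intro k hk S h0 htop hss
    constructor
    · rintro ⟨T, hT0, hTtop, hTss, ⟨i0, hi0, hdiff⟩, hsc⟩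
      intro j hj1 hj2
      obtain ⟨i, hi1, hi2, hSj⟩ := hsc j hj1 hj2
      have hmono := chainMono T (d - 2) hTss
      have hu1 : u ∈ T (i0 + 1) ∧ u ∉ T i0 := by
        have : u ∈ T (i0 + 1) \ T i0 := by rw [hdiff]; exact Finset.mem_insert_self u {v}
        exact Finset.mem_sdiff.mp this
      have hv1 : v ∈ T (i0 + 1) ∧ v ∉ T i0 := by
        have : v ∈ T (i0 + 1) \ T i0 := by
          rw [hdiff]; exact Finset.mem_insert_of_mem (Finset.mem_singleton_self v)
        exact Finset.mem_sdiff.mp this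
      rw [hSj]
      rcases le_or_gt i i0 with h | h
      · right
        have hsub : T i ⊆ T i0 := hmono i i0 h (by omega)
        exact ⟨fun hu => hu1.2 (hsub hu), fun hv => hv1.2 (hsub hv)⟩
      · left
        have hsub : T (i0 + 1) ⊆ T i := hmono (i0 + 1) i h (by omega)
        exact ⟨hsub hu1.1, hsub hv1.1⟩
    · intro hbn
      exact exists_maximal_chain hd u v huv hk S h0 htop hss hbn
  · intro k hk
    exact card_chains_eq hd hk u v huv
end

section
/- Assume d ≥ 3 and let e = {u, v} and f = {x, y} be two distinct edges of G (possibly sharing a vertex). For every k ≥ 1, the number of chains S_1 ⊊ S_2 ⊊ ⋯ ⊊ S_k of proper nonempty subsets of [d] in which every S_i contains both or neither of u and v, and also both or neither of x and y, equals the number of chains of length k of proper nonempty subsets of a (d−2)-element set. (Thus the intersection of the e-sphere and the f-sphere is isomorphic to the order complex of the truncated Boolean algebra on d−2 atoms.) -/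
open Finset

private def fwdMap {d m : ℕ} {π : Fin d → Fin d} (eF : {w : Fin d // π w = w} ≃ Fin m)
    (A : Finset (Fin d)) : Finset (Fin m) :=
  Finset.univ.filter fun t => ((eF.symm t : {w : Fin d // π w = w}) : Fin d) ∈ A

private def bwdMap {d m : ℕ} {π : Fin d → Fin d} (hidem : ∀ w, π (π w) = π w)
    (eF : {w : Fin d // π w = w} ≃ Fin m) (T : Finset (Fin m)) : Finset (Fin d) :=
  Finset.univ.filter fun w => eF ⟨π w, hidem w⟩ ∈ T

private lemma mem_fwdMap {d m : ℕ} {π : Fin d → Fin d} (eF : {w : Fin d // π w = w} ≃ Fin m)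
    (A : Finset (Fin d)) (t : Fin m) :
    t ∈ fwdMap eF A ↔ ((eF.symm t : {w : Fin d // π w = w}) : Fin d) ∈ A := by
  simp [fwdMap]

private lemma mem_bwdMap {d m : ℕ} {π : Fin d → Fin d} (hidem : ∀ w, π (π w) = π w)
    (eF : {w : Fin d // π w = w} ≃ Fin m) (T : Finset (Fin m)) (w : Fin d) :
    w ∈ bwdMap hidem eF T ↔ eF ⟨π w, hidem w⟩ ∈ T := by
  simp [bwdMap]

private lemma fwd_bwd {d m : ℕ} {π : Fin d → Fin d} (hidem : ∀ w, π (π w) = π w)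
    (eF : {w : Fin d // π w = w} ≃ Fin m) (T : Finset (Fin m)) :
    fwdMap eF (bwdMap hidem eF T) = T := by
  ext t
  rw [mem_fwdMap, mem_bwdMap]
  have h2 : (⟨π ((eF.symm t : {w : Fin d // π w = w}) : Fin d), hidem _⟩
      : {w : Fin d // π w = w}) = eF.symm t := Subtype.ext (eF.symm t).2
  rw [h2, Equiv.apply_symm_apply]

private lemma bwd_fwd {d m : ℕ} {π : Fin d → Fin d} (hidem : ∀ w, π (π w) = π w)
    (eF : {w : Fin d // π w = w} ≃ Fin m) (A : Finset (Fin d))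
    (hA : ∀ w, w ∈ A ↔ π w ∈ A) :
    bwdMap hidem eF (fwdMap eF A) = A := by
  ext w
  rw [mem_bwdMap, mem_fwdMap, Equiv.symm_apply_apply]
  exact (hA w).symm

private theorem chain_card_eq {d k : ℕ} (u v x y : Fin d) (π : Fin d → Fin d)
    (hidem : ∀ w, π (π w) = π w)
    (huv : π u = π v) (hxy : π x = π y)
    (hcond : ∀ A : Finset (Fin d), (u ∈ A ↔ v ∈ A) → (x ∈ A ↔ y ∈ A) →
      ∀ w, (w ∈ A ↔ π w ∈ A))
    (hcard : Fintype.card {w : Fin d // π w = w} = d - 2) :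
    Nat.card {S : ℕ → Finset (Fin d) // S 0 = ∅ ∧
        (∀ i, k + 1 ≤ i → S i = Finset.univ) ∧ (∀ i, i ≤ k → S i ⊂ S (i + 1)) ∧
        (∀ j, 1 ≤ j → j ≤ k → ((u ∈ S j ∧ v ∈ S j) ∨ (u ∉ S j ∧ v ∉ S j))) ∧
        (∀ j, 1 ≤ j → j ≤ k → ((x ∈ S j ∧ y ∈ S j) ∨ (x ∉ S j ∧ y ∉ S j)))} =
      Nat.card {S : ℕ → Finset (Fin (d - 2)) // S 0 = ∅ ∧
        (∀ i, k + 1 ≤ i → S i = Finset.univ) ∧ (∀ i, i ≤ k → S i ⊂ S (i + 1))} := by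
  classical
  have hcard' : Fintype.card {w : Fin d // π w = w} = Fintype.card (Fin (d - 2)) := by
    simpa using hcard
  let eF : {w : Fin d // π w = w} ≃ Fin (d - 2) := Fintype.equivOfCardEq hcard'
  have fwd_empty : fwdMap eF (∅ : Finset (Fin d)) = ∅ := by
    ext t; simp [mem_fwdMap]
  have fwd_univ : fwdMap eF (univ : Finset (Fin d)) = univ := by
    ext t; simp [mem_fwdMap]
  have bwd_empty : bwdMap hidem eF (∅ : Finset (Fin (d - 2))) = ∅ := by
    ext w; simp [mem_bwdMap]
  have bwd_univ : bwdMap hidem eF (univ : Finset (Fin (d - 2))) = univ := by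
    ext w; simp [mem_bwdMap]
  have fwd_mono : ∀ A B : Finset (Fin d), A ⊆ B → fwdMap eF A ⊆ fwdMap eF B := by
    intro A B hAB t ht
    exact (mem_fwdMap eF B t).2 (hAB ((mem_fwdMap eF A t).1 ht))
  have bwd_mono : ∀ T U : Finset (Fin (d - 2)), T ⊆ U →
      bwdMap hidem eF T ⊆ bwdMap hidem eF U := by
    intro T U hTU w hw
    exact (mem_bwdMap hidem eF U w).2 (hTU ((mem_bwdMap hidem eF T w).1 hw))
  have hLmem : ∀ (S : ℕ → Finset (Fin d)), S 0 = ∅ →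
      (∀ i, k + 1 ≤ i → S i = Finset.univ) →
      (∀ j, 1 ≤ j → j ≤ k → ((u ∈ S j ∧ v ∈ S j) ∨ (u ∉ S j ∧ v ∉ S j))) →
      (∀ j, 1 ≤ j → j ≤ k → ((x ∈ S j ∧ y ∈ S j) ∨ (x ∉ S j ∧ y ∉ S j))) →
      ∀ i w, w ∈ S i ↔ π w ∈ S i := by
    intro S h0 htop h1 h2 i w
    rcases Nat.lt_or_ge i 1 with hi | hi
    · interval_cases i
      simp [h0]
    · rcases Nat.lt_or_ge k i with hik | hik
      · rw [htop i (by omega)]; simp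
      · refine hcond (S i) ?_ ?_ w
        · rcases h1 i hi hik with ⟨a, b⟩ | ⟨a, b⟩ <;> simp [a, b]
        · rcases h2 i hi hik with ⟨a, b⟩ | ⟨a, b⟩ <;> simp [a, b]
  refine Nat.card_congr ⟨fun S => ⟨fun i => fwdMap eF (S.1 i), ?_⟩,
    fun T => ⟨fun i => bwdMap hidem eF (T.1 i), ?_⟩, ?_, ?_⟩
  · obtain ⟨h0, htop, hchain, h1, h2⟩ := S.2
    refine ⟨?_, fun i hi => ?_, fun i hik => ?_⟩
    · show fwdMap eF (S.1 0) = ∅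
      rw [h0, fwd_empty]
    · show fwdMap eF (S.1 i) = univ
      rw [htop i hi, fwd_univ]
    · show fwdMap eF (S.1 i) ⊂ fwdMap eF (S.1 (i + 1))
      have hA := hLmem S.1 h0 htop h1 h2 i
      have hB := hLmem S.1 h0 htop h1 h2 (i + 1)
      have hss := hchain i hik
      refine Finset.ssubset_iff_subset_ne.2 ⟨fwd_mono _ _ hss.subset, fun heq => ?_⟩
      have : S.1 i = S.1 (i + 1) := by
        rw [← bwd_fwd hidem eF (S.1 i) hA, ← bwd_fwd hidem eF (S.1 (i + 1)) hB, heq]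
      exact hss.ne this
  · obtain ⟨h0, htop, hchain⟩ := T.2
    refine ⟨?_, fun i hi => ?_, fun i hik => ?_, fun j hj hjk => ?_, fun j hj hjk => ?_⟩
    · show bwdMap hidem eF (T.1 0) = ∅
      rw [h0, bwd_empty]
    · show bwdMap hidem eF (T.1 i) = univ
      rw [htop i hi, bwd_univ]
    · show bwdMap hidem eF (T.1 i) ⊂ bwdMap hidem eF (T.1 (i + 1))
      have hss := hchain i hik
      refine Finset.ssubset_iff_subset_ne.2 ⟨bwd_mono _ _ hss.subset, fun heq => ?_⟩
      have : T.1 i = T.1 (i + 1) := by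
        rw [← fwd_bwd hidem eF (T.1 i), ← fwd_bwd hidem eF (T.1 (i + 1)), heq]
      exact hss.ne this
    · show (u ∈ bwdMap hidem eF (T.1 j) ∧ v ∈ bwdMap hidem eF (T.1 j)) ∨
        (u ∉ bwdMap hidem eF (T.1 j) ∧ v ∉ bwdMap hidem eF (T.1 j))
      have hsub : (⟨π u, hidem u⟩ : {w : Fin d // π w = w}) = ⟨π v, hidem v⟩ :=
        Subtype.ext huv
      have h : u ∈ bwdMap hidem eF (T.1 j) ↔ v ∈ bwdMap hidem eF (T.1 j) := by
        rw [mem_bwdMap, mem_bwdMap, hsub]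
      tauto
    · show (x ∈ bwdMap hidem eF (T.1 j) ∧ y ∈ bwdMap hidem eF (T.1 j)) ∨
        (x ∉ bwdMap hidem eF (T.1 j) ∧ y ∉ bwdMap hidem eF (T.1 j))
      have hsub : (⟨π x, hidem x⟩ : {w : Fin d // π w = w}) = ⟨π y, hidem y⟩ :=
        Subtype.ext hxy
      have h : x ∈ bwdMap hidem eF (T.1 j) ↔ y ∈ bwdMap hidem eF (T.1 j) := by
        rw [mem_bwdMap, mem_bwdMap, hsub]
      tauto
  · rintro ⟨S, h0, htop, hchain, h1, h2⟩
    exact Subtype.ext (funext fun i => bwd_fwd hidem eF (S i) (hLmem S h0 htop h1 h2 i))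
  · rintro ⟨T, h0, htop, hchain⟩
    exact Subtype.ext (funext fun i => fwd_bwd hidem eF (T i))

private lemma pi_idem {d : ℕ} (p q r s : Fin d) (hpq : p ≠ q) (hrp : r ≠ p) (hrq : r ≠ q)
    (hsp : s ≠ p) (hsq : s ≠ q) (w : Fin d) :
    (fun w => if w = p then r else if w = q then s else w)
      ((fun w => if w = p then r else if w = q then s else w) w) =
      (fun w => if w = p then r else if w = q then s else w) w := by
  by_cases h1 : w = p
  · simp [h1, hrp, hrq]
  · by_cases h2 : w = q
    · simp [h1, h2, hsp, hsq, hpq.symm]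
    · simp [h1, h2]

private lemma pi_card {d : ℕ} (p q r s : Fin d) (hpq : p ≠ q) (hrp : r ≠ p)
    (hsq : s ≠ q) :
    Fintype.card {w : Fin d //
        (fun w => if w = p then r else if w = q then s else w) w = w} = d - 2 := by
  rw [Fintype.card_subtype]
  have h : Finset.univ.filter
      (fun w : Fin d => (fun w => if w = p then r else if w = q then s else w) w = w)
      = Finset.univ \ {p, q} := by
    ext w
    by_cases h1 : w = p
    · subst h1; simp [hrp]
    · by_cases h2 : w = q
      · subst h2; simp [hsq, hpq.symm]
      · simp [h1, h2]
  rw [h, Finset.card_sdiff_of_subset (by simp)]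
  rw [Finset.card_univ, Fintype.card_fin]
  congr 1
  rw [Finset.card_insert_of_notMem (by simp [hpq]), Finset.card_singleton]

/-- Let `d ≥ 3` and let `{u, v}` and `{x, y}` be two distinct edges
of `G` (possibly sharing a vertex).  For every `k ≥ 1`, the number of chains
`∅ ⊊ S 1 ⊊ ⋯ ⊊ S k ⊊ [d]` of proper nonempty subsets of `[d]` (encoded by
`S : ℕ → Finset (Fin d)` with `S 0 = ∅` and `S i = univ` for `i ≥ k + 1`) in which
every `S j` contains both or neither of `u, v`, and also both or neither of `x, y`,
equals the number of chains of length `k` of proper nonempty subsets of a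
`(d − 2)`-element set.  (Thus the intersection of the `e`-sphere and the `f`-sphere is
isomorphic to the order complex of the truncated Boolean algebra on `d − 2` atoms.) -/
theorem edge_sphere_intersection {d : ℕ} (hd : 3 ≤ d) (G : SimpleGraph (Fin d))
    (u v x y : Fin d) (he : G.Adj u v) (hf : G.Adj x y)
    (hef : ({u, v} : Finset (Fin d)) ≠ {x, y}) (k : ℕ) (hk : 1 ≤ k) :
    Nat.card {S : ℕ → Finset (Fin d) // S 0 = ∅ ∧
        (∀ i, k + 1 ≤ i → S i = Finset.univ) ∧ (∀ i, i ≤ k → S i ⊂ S (i + 1)) ∧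
        (∀ j, 1 ≤ j → j ≤ k → ((u ∈ S j ∧ v ∈ S j) ∨ (u ∉ S j ∧ v ∉ S j))) ∧
        (∀ j, 1 ≤ j → j ≤ k → ((x ∈ S j ∧ y ∈ S j) ∨ (x ∉ S j ∧ y ∉ S j)))} =
      Nat.card {S : ℕ → Finset (Fin (d - 2)) // S 0 = ∅ ∧
        (∀ i, k + 1 ≤ i → S i = Finset.univ) ∧ (∀ i, i ≤ k → S i ⊂ S (i + 1))} := by
  have huvne : u ≠ v := he.ne
  have hxyne : x ≠ y := hf.ne
  by_cases hux : u = x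
  · -- u = x : merge v and y into u
    subst hux
    have hvy : v ≠ y := fun h => hef (by rw [h])
    refine chain_card_eq u v u y (fun w => if w = v then u else if w = y then u else w)
      (fun w => pi_idem v y u u hvy huvne hxyne huvne hxyne w) ?_ ?_ ?_
      (pi_card v y u u hvy huvne hxyne)
    · simp [huvne, hxyne]
    · simp [huvne, hxyne, hvy.symm]
    · intro A h1 h2 w
      by_cases hw1 : w = v
      · subst hw1; simp [huvne]; tauto
      · by_cases hw2 : w = y
        · subst hw2; simp [hvy.symm, hxyne.symm]; tauto
        · simp [hw1, hw2]
  · by_cases huy : u = y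
    · -- u = y : merge v and x into u
      subst huy
      have hvx : v ≠ x := fun h => hef (by rw [h]; exact Finset.pair_comm u x)
      have hux' : u ≠ x := hux
      refine chain_card_eq u v x u (fun w => if w = v then u else if w = x then u else w)
        (fun w => pi_idem v x u u hvx huvne hux' huvne hux' w) ?_ ?_ ?_
        (pi_card v x u u hvx huvne hux')
      · simp [huvne, hux']
      · simp [hvx.symm, hux'.symm, huvne]
      · intro A h1 h2 w
        by_cases hw1 : w = v
        · subst hw1; simp [huvne]; tauto
        · by_cases hw2 : w = x
          · subst hw2; simp [hvx.symm, hux'.symm]; tauto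
          · simp [hw1, hw2]
    · by_cases hvx : v = x
      · -- v = x : merge v and y into u
        subst hvx
        have huy' : u ≠ y := huy
        refine chain_card_eq u v v y (fun w => if w = v then u else if w = y then u else w)
          (fun w => pi_idem v y u u hxyne huvne huy' huvne huy' w) ?_ ?_ ?_
          (pi_card v y u u hxyne huvne huy')
        · simp [huvne, huy']
        · simp [hxyne.symm, huy']
        · intro A h1 h2 w
          by_cases hw1 : w = v
          · subst hw1; simp [huvne]; tauto
          · by_cases hw2 : w = y
            · subst hw2; simp [hxyne.symm, huy'.symm]; tauto
            · simp [hw1, hw2]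
      · by_cases hvy : v = y
        · -- v = y : merge v and x into u
          subst hvy
          have hux' : u ≠ x := hux
          have hvx' : v ≠ x := hvx
          refine chain_card_eq u v x v (fun w => if w = v then u else if w = x then u else w)
            (fun w => pi_idem v x u u hvx' huvne hux' huvne hux' w) ?_ ?_ ?_
            (pi_card v x u u hvx' huvne hux')
          · simp [huvne, hux']
          · simp [hvx'.symm, hux'.symm, huvne]
          · intro A h1 h2 w
            by_cases hw1 : w = v
            · subst hw1; simp [huvne]; tauto
            · by_cases hw2 : w = x
              · subst hw2; simp [hvx'.symm, hux'.symm]; tauto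
              · simp [hw1, hw2]
        · -- all four distinct : map v ↦ u and y ↦ x
          have hux' : u ≠ x := hux
          have huy' : u ≠ y := huy
          have hvx' : v ≠ x := hvx
          have hvy' : v ≠ y := hvy
          refine chain_card_eq u v x y (fun w => if w = v then u else if w = y then x else w)
            (fun w => pi_idem v y u x hvy' huvne huy' hvx'.symm hxyne w) ?_ ?_ ?_
            (pi_card v y u x hvy' huvne hxyne)
          · simp [huvne, huy']
          · simp [hvx'.symm, hxyne, hvy'.symm]
          · intro A h1 h2 w
            by_cases hw1 : w = v
            · subst hw1; simp [huvne]; tauto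
            · by_cases hw2 : w = y
              · subst hw2; simp [hvy'.symm, hxyne.symm]; tauto
              · simp [hw1, hw2]
end
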